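/- arXiv:2211.14681 — 5 statements merged into one kernel-verified Lean document; each statement's English description precedes it below -/
import Mathlib

section
/- Let R be a φ-ring and M an R-module. Then M is strongly φ-flat if and only if Tor_n^R(R/I, M) = 0 for every nonnil ideal I of R and every n ≥ 1, if and only if Tor_n^R(R/I, M) = 0 for every finitely generated nonnil ideal I of R and every n ≥ 1. -/
open CategoryTheory

universe u

/-- An ideal is *nonnil* if it is not contained in the nilradical. -/
def Ideal.IsNonnil {R : Type u} [CommRing R] (I : Ideal R) : Prop :=
  ¬ I ≤ nilradical R

/-- An `R`-module `T` is *φ-torsion* if every element is annihilated by some nonnil ideal. -/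
def IsPhiTorsion (R : Type u) [CommRing R] (T : Type u) [AddCommGroup T] [Module R T] : Prop :=
  ∀ t : T, ∃ I : Ideal R, I.IsNonnil ∧ ∀ a ∈ I, a • t = 0

/-- A commutative ring is a *φ-ring* if its nilradical is a divided prime ideal. -/
def IsPhiRing (R : Type u) [CommRing R] : Prop :=
  (nilradical R).IsPrime ∧ ∀ x : R, x ∉ nilradical R → nilradical R ≤ Ideal.span {x}

/-- A commutative ring is a *ZN-ring* if the set of zero-divisors equals the nilradical. -/
def IsZNRing (R : Type u) [CommRing R] : Prop :=
  {x : R | ∃ y : R, y ≠ 0 ∧ x * y = 0} = (nilradical R : Set R)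

/-- `M` is *strongly φ-flat* if `Tor_n^R(T, M) = 0` for every φ-torsion `T` and `n ≥ 1`. -/
def IsStronglyPhiFlat (R : Type u) [CommRing R] (M : Type u) [AddCommGroup M] [Module R M] :
    Prop :=
  ∀ (T : Type u) [AddCommGroup T] [Module R T], IsPhiTorsion R T →
    ∀ n : ℕ, 1 ≤ n →
      Subsingleton (((Tor (ModuleCat.{u} R) n).obj (ModuleCat.of R T)).obj (ModuleCat.of R M))

/-- `M` is *strongly nonnil-injective* if `Ext_R^n(T, M) = 0` for every φ-torsion `T`
and `n ≥ 1`. -/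
def IsStronglyNonnilInjective (R : Type u) [CommRing R]
    (M : Type u) [AddCommGroup M] [Module R M] : Prop :=
  ∀ (T : Type u) [AddCommGroup T] [Module R T], IsPhiTorsion R T →
    ∀ n : ℕ, 1 ≤ n →
      Subsingleton (((Ext R (ModuleCat.{u} R) n).obj
        (Opposite.op (ModuleCat.of R T))).obj (ModuleCat.of R M))

section Aux
open LinearMap TensorProduct Submodule

variable {R : Type u} [CommRing R]

namespace PhiAux

/-- commuting lTensor and rTensor -/
theorem lr_comm {A B W W' : Type u} [AddCommGroup A] [AddCommGroup B] [AddCommGroup W]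
    [AddCommGroup W'] [Module R A] [Module R B] [Module R W] [Module R W']
    (f : A →ₗ[R] B) (d : W →ₗ[R] W') (u : A ⊗[R] W) :
    d.lTensor B (f.rTensor W u) = f.rTensor W' (d.lTensor A u) := by
  rw [← LinearMap.comp_apply, ← LinearMap.comp_apply, LinearMap.lTensor_comp_rTensor,
    LinearMap.rTensor_comp_lTensor]

variable {X Y Z : Type u} [AddCommGroup X] [AddCommGroup Y] [AddCommGroup Z]
  [Module R X] [Module R Y] [Module R Z]

/-- Concrete exactness condition for `T ⊗ P` at a spot of the resolution. -/
def TorV (d₂ : X →ₗ[R] Y) (d₁ : Y →ₗ[R] Z)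
    (T : Type u) [AddCommGroup T] [Module R T] : Prop :=
  ∀ z : T ⊗[R] Y, d₁.lTensor T z = 0 → ∃ w : T ⊗[R] X, d₂.lTensor T w = z

variable {d₂ : X →ₗ[R] Y} {d₁ : Y →ₗ[R] Z}

theorem TorV.of_equiv {T T' : Type u} [AddCommGroup T] [Module R T] [AddCommGroup T']
    [Module R T'] (e : T ≃ₗ[R] T') (h : TorV d₂ d₁ T) : TorV d₂ d₁ T' := by
  intro z hz
  obtain ⟨w, hw⟩ := h ((e.symm : T' →ₗ[R] T).rTensor Y z) (by
    rw [lr_comm, hz, map_zero])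
  refine ⟨(e : T →ₗ[R] T').rTensor X w, ?_⟩
  rw [lr_comm, hw, ← LinearMap.rTensor_comp_apply]
  have : (e : T →ₗ[R] T') ∘ₗ (e.symm : T' →ₗ[R] T) = LinearMap.id := by
    ext t; simp
  rw [this, LinearMap.rTensor_id, LinearMap.id_apply]

theorem TorV.of_subsingleton {T : Type u} [AddCommGroup T] [Module R T] [Subsingleton T] :
    TorV d₂ d₁ T := by
  intro z _
  refine ⟨0, ?_⟩
  have hz : ∀ u : T ⊗[R] Y, u = 0 := by
    intro u
    induction u with
    | zero => rfl
    | tmul a b => rw [Subsingleton.elim a 0, zero_tmul]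
    | add a b ha hb => rw [ha, hb, add_zero]
  rw [hz z, map_zero]

/-- extension closedness -/
theorem TorV.extension (hd : d₁ ∘ₗ d₂ = 0) [Module.Flat R Z]
    {A B C : Type u} [AddCommGroup A] [AddCommGroup B] [AddCommGroup C]
    [Module R A] [Module R B] [Module R C]
    (f : A →ₗ[R] B) (g : B →ₗ[R] C)
    (hf : Function.Injective f) (hg : Function.Surjective g) (hfg : Function.Exact f g)
    (hA : TorV d₂ d₁ A) (hC : TorV d₂ d₁ C) : TorV d₂ d₁ B := by
  intro z hz
  have hdd : ∀ (T : Type u) [AddCommGroup T] [Module R T] (u : T ⊗[R] X),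
      d₁.lTensor T (d₂.lTensor T u) = 0 := by
    intro T _ _ u
    rw [← LinearMap.lTensor_comp_apply, hd, LinearMap.lTensor_zero, LinearMap.zero_apply]
  obtain ⟨wc, hwc⟩ := hC (g.rTensor Y z) (by rw [lr_comm, hz, map_zero])
  obtain ⟨w, rfl⟩ := LinearMap.rTensor_surjective X hg wc
  have h1 : g.rTensor Y (z - d₂.lTensor B w) = 0 := by
    rw [map_sub, ← lr_comm, hwc, sub_self]
  obtain ⟨a, ha⟩ := (rTensor_exact Y hfg hg (z - d₂.lTensor B w)).mp h1
  have ha0 : d₁.lTensor A a = 0 := by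
    apply Module.Flat.rTensor_preserves_injective_linearMap (M := Z) f hf
    rw [map_zero, ← lr_comm, ha, map_sub, hz, hdd, sub_zero]
  obtain ⟨a', ha'⟩ := hA a ha0
  refine ⟨w + f.rTensor X a', ?_⟩
  rw [map_add, lr_comm, ha', ha]
  abel


theorem exists_fg_kill {T W : Type u} [AddCommGroup T] [Module R T] [AddCommGroup W] [Module R W]
    (N₀ : Submodule R T) (hN₀ : N₀.FG) (y : (↥N₀) ⊗[R] W)
    (hy : (N₀.subtype).rTensor W y = 0) :
    ∃ (N₁ : Submodule R T) (h : N₀ ≤ N₁), N₁.FG ∧ (Submodule.inclusion h).rTensor W y = 0 := by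
  classical
  let ι := {N : Submodule R T // N.FG}
  haveI : IsDirected ι (· ≤ ·) :=
    ⟨fun a b => ⟨⟨a.1 ⊔ b.1, a.2.sup b.2⟩, Subtype.coe_le_coe.mp le_sup_left, Subtype.coe_le_coe.mp le_sup_right⟩⟩
  let f : ∀ i j : ι, i ≤ j → (↥i.1 : Type u) →ₗ[R] ↥j.1 := fun i j h => Submodule.inclusion h
  let e : Module.DirectLimit (fun i : ι => ↥i.1) f →ₗ[R] T :=
    Module.DirectLimit.lift R ι _ f (fun i => i.1.subtype) (fun i j hij x => rfl)
  have einj : Function.Injective e :=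
    Module.DirectLimit.lift_injective _ _ (fun i => i.1.injective_subtype)
  have esurj : Function.Surjective e := fun t =>
    ⟨Module.DirectLimit.of R ι _ f ⟨Submodule.span R {t}, Submodule.fg_span_singleton t⟩
      ⟨t, Submodule.mem_span_singleton_self t⟩, by
        simp only [e]; erw [Module.DirectLimit.lift_of]; rfl⟩
  let eL : Module.DirectLimit (fun i : ι => ↥i.1) f ≃ₗ[R] T :=
    LinearEquiv.ofBijective e ⟨einj, esurj⟩
  let ψ : Module.DirectLimit (fun i : ι => (↥i.1) ⊗[R] W) (fun i j h => (f i j h).rTensor W)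
      ≃ₗ[R] T ⊗[R] W :=
    (TensorProduct.directLimitLeft f W).symm.trans
      (TensorProduct.congr eL (LinearEquiv.refl R W))
  have hψ : ∀ (i : ι) (u : (↥i.1) ⊗[R] W),
      ψ (Module.DirectLimit.of R ι _ (fun i j h => (f i j h).rTensor W) i u)
        = (i.1.subtype).rTensor W u := by
    intro i u
    induction u with
    | zero => simp
    | tmul a b =>
        simp only [ψ, LinearEquiv.trans_apply, TensorProduct.directLimitLeft_symm_of_tmul,
          TensorProduct.congr_tmul, LinearEquiv.refl_apply, rTensor_tmul]
        congr 1
        simp only [eL, e, LinearEquiv.ofBijective_apply]; erw [Module.DirectLimit.lift_of]; exact fun _ _ _ _ => rfl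
    | add a b ha hb => rw [map_add, map_add, ha, hb, map_add]
  haveI : DirectedSystem (fun i : ι => (↥i.1) ⊗[R] W) (fun i j h => (f i j h).rTensor W) := by
    have hfi : ∀ (i : ι) (h : i ≤ i), f i i h = LinearMap.id := fun i h => by ext y; rfl
    have hc : ∀ (i j k : ι) (hij : i ≤ j) (hjk : j ≤ k),
        (f j k hjk) ∘ₗ (f i j hij) = f i k (le_trans hij hjk) := fun _ _ _ _ _ => by ext y; rfl
    constructor
    · intro i x
      rw [hfi, rTensor_id, LinearMap.id_apply]
    · intro i j k hij hjk x
      rw [← rTensor_comp_apply, hc]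
  have h0 : Module.DirectLimit.of R ι _ (fun i j h => (f i j h).rTensor W) ⟨N₀, hN₀⟩ y = 0 := by
    apply ψ.injective
    rw [hψ, map_zero]
    exact hy
  obtain ⟨j, hij, hj⟩ := Module.DirectLimit.of.zero_exact h0
  exact ⟨j.1, hij, j.2, hj⟩


theorem TorV.of_fg_submodules {X Y Z : Type u} [AddCommGroup X] [AddCommGroup Y] [AddCommGroup Z]
    [Module R X] [Module R Y] [Module R Z] {d₂ : X →ₗ[R] Y} {d₁ : Y →ₗ[R] Z}
    {T : Type u} [AddCommGroup T] [Module R T]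
    (hT : ∀ N : Submodule R T, N.FG → TorV d₂ d₁ (↥N)) : TorV d₂ d₁ T := by
  intro z hz
  obtain ⟨N₀, hfin, hsub⟩ := TensorProduct.exists_finite_submodule_left_of_setFinite
    ({z} : Set (T ⊗[R] Y)) (Set.finite_singleton z)
  obtain ⟨z₀, hz₀⟩ := hsub rfl
  have hN₀ : N₀.FG := Module.Finite.iff_fg.mp hfin
  have hd0 : (N₀.subtype).rTensor Z (d₁.lTensor (↥N₀) z₀) = 0 := by
    rw [← lr_comm, hz₀, hz]
  obtain ⟨N₁, hle, hN₁, h0⟩ := exists_fg_kill N₀ hN₀ _ hd0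
  obtain ⟨w, hw⟩ := hT N₁ hN₁ ((Submodule.inclusion hle).rTensor Y z₀) (by
    rw [lr_comm]; exact h0)
  refine ⟨(N₁.subtype).rTensor X w, ?_⟩
  rw [lr_comm, hw, ← rTensor_comp_apply, Submodule.subtype_comp_inclusion, hz₀]

theorem TorV.of_span_finset {X Y Z : Type u} [AddCommGroup X] [AddCommGroup Y] [AddCommGroup Z]
    [Module R X] [Module R Y] [Module R Z] {d₂ : X →ₗ[R] Y} {d₁ : Y →ₗ[R] Z}
    (hd : d₁ ∘ₗ d₂ = 0) [Module.Flat R Z]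
    {T : Type u} [AddCommGroup T] [Module R T] (hT : IsPhiTorsion R T)
    (hnil : ∀ I : Ideal R, I.IsNonnil → TorV d₂ d₁ (R ⧸ I)) :
    ∀ s : Finset T, TorV d₂ d₁ (↥(Submodule.span R (s : Set T))) := by
  classical
  intro s
  induction s using Finset.induction_on with
  | empty =>
      haveI : Subsingleton (↥(Submodule.span R ((∅ : Finset T) : Set T))) := by
        rw [Finset.coe_empty, Submodule.span_empty]
        infer_instance
      exact TorV.of_subsingleton
  | @insert a s ha ih =>
      set A := Submodule.span R (s : Set T) with hA
      set B := Submodule.span R ((insert a s : Finset T) : Set T) with hB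
      have hAB : A ≤ B := Submodule.span_mono (by
        rw [Finset.coe_insert]; exact Set.subset_insert _ _)
      have haB : a ∈ B := Submodule.subset_span (by simp)
      set A' : Submodule R (↥B) := A.comap B.subtype with hA'
      let φ : R →ₗ[R] ((↥B) ⧸ A') := A'.mkQ ∘ₗ (LinearMap.toSpanSingleton R (↥B) ⟨a, haB⟩)
      have hφsurj : Function.Surjective φ := by
        intro c
        obtain ⟨b, rfl⟩ := A'.mkQ_surjective c
        have hBeq : B = Submodule.span R (insert a (s : Set T)) := by
          rw [hB, Finset.coe_insert]
        have hb : (b : T) ∈ Submodule.span R (insert a (s : Set T)) :=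
          (le_of_eq hBeq) b.2
        obtain ⟨r, zz, hzA, hbe⟩ := Submodule.mem_span_insert.mp hb
        refine ⟨r, ?_⟩
        have hcoe : ((b - r • (⟨a, haB⟩ : ↥B)) : T) = zz := by
          push_cast
          rw [hbe]; abel
        have hmem : b - r • (⟨a, haB⟩ : ↥B) ∈ A' := by
          rw [hA', Submodule.mem_comap]
          show ((b - r • (⟨a, haB⟩ : ↥B)) : T) ∈ A
          rw [hcoe]
          exact hzA
        have h0 : A'.mkQ (b - r • (⟨a, haB⟩ : ↥B)) = 0 := by
          rw [Submodule.mkQ_apply, Submodule.Quotient.mk_eq_zero]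
          exact hmem
        rw [map_sub, sub_eq_zero] at h0
        show A'.mkQ (r • (⟨a, haB⟩ : ↥B)) = A'.mkQ b
        exact h0.symm
      have hkernonnil : Ideal.IsNonnil (LinearMap.ker φ) := by
        obtain ⟨I, hI, hann⟩ := hT a
        intro hle
        refine hI (fun x hx => hle ?_)
        have hxa : x • (⟨a, haB⟩ : ↥B) = 0 := by
          ext
          simpa using hann x hx
        simp only [LinearMap.mem_ker, φ, LinearMap.comp_apply,
          LinearMap.toSpanSingleton_apply, hxa, map_zero]
      have hC : TorV d₂ d₁ ((↥B) ⧸ A') :=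
        TorV.of_equiv (φ.quotKerEquivOfSurjective hφsurj) (hnil _ hkernonnil)
      have hexact : Function.Exact (Submodule.inclusion hAB) A'.mkQ := by
        rw [LinearMap.exact_iff, Submodule.ker_mkQ, Submodule.range_inclusion]
      exact TorV.extension hd (Submodule.inclusion hAB) A'.mkQ
        (Submodule.inclusion_injective hAB) A'.mkQ_surjective hexact ih hC

theorem TorV.of_phiTorsion {X Y Z : Type u} [AddCommGroup X] [AddCommGroup Y] [AddCommGroup Z]
    [Module R X] [Module R Y] [Module R Z] {d₂ : X →ₗ[R] Y} {d₁ : Y →ₗ[R] Z}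
    (hd : d₁ ∘ₗ d₂ = 0) [Module.Flat R Z]
    {T : Type u} [AddCommGroup T] [Module R T] (hT : IsPhiTorsion R T)
    (hnil : ∀ I : Ideal R, I.IsNonnil → TorV d₂ d₁ (R ⧸ I)) : TorV d₂ d₁ T := by
  refine TorV.of_fg_submodules (fun N hN => ?_)
  obtain ⟨s, rfl⟩ := hN
  exact TorV.of_span_finset hd hT hnil s

/-- the transition maps between quotients by nested ideals -/
def qq (J J' : Ideal R) (h : J ≤ J') : (R ⧸ J) →ₗ[R] (R ⧸ J') :=
  Submodule.mapQ J J' LinearMap.id (fun x hx => by simpa using h hx)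

set_option maxHeartbeats 1000000 in
theorem qq_mk {J J' : Ideal R} (h : J ≤ J') (r : R) :
    qq J J' h (Submodule.Quotient.mk r) = Submodule.Quotient.mk r := by
  unfold qq
  rw [Submodule.mapQ_apply]
  rfl

theorem qq_surjective {J J' : Ideal R} (h : J ≤ J') : Function.Surjective (qq J J' h) := by
  intro c
  obtain ⟨r, rfl⟩ := Submodule.mkQ_surjective J' c
  exact ⟨Submodule.Quotient.mk r, qq_mk h r⟩

theorem qq_comp {J₀ J₁ J₂ : Ideal R} (h₀ : J₀ ≤ J₁) (h₁ : J₁ ≤ J₂) :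
    (qq J₁ J₂ h₁) ∘ₗ (qq J₀ J₁ h₀) = qq J₀ J₂ (le_trans h₀ h₁) := by
  refine Submodule.linearMap_qext _ (LinearMap.ext fun r => ?_)
  simp only [LinearMap.comp_apply, Submodule.mkQ_apply, qq_mk]

/-- dying at a finitely generated stage, for quotients of ideals -/
theorem qq_exists_fg_kill {J I : Ideal R} (hJ : J ≤ I) (hJfg : J.FG)
    {W : Type u} [AddCommGroup W] [Module R W] (u : (R ⧸ J) ⊗[R] W)
    (hu : (qq J I hJ).rTensor W u = 0) :
    ∃ (J' : Ideal R) (hJJ' : J ≤ J') (_ : J' ≤ I), J'.FG ∧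
      (qq J J' hJJ').rTensor W u = 0 := by
  classical
  set q := qq J I hJ with hq
  have hex := rTensor_exact (M := ↥(LinearMap.ker q)) W
    (LinearMap.exact_subtype_ker_map q) (qq_surjective hJ)
  obtain ⟨v, hv⟩ := (hex u).mp hu
  obtain ⟨S, hS⟩ := TensorProduct.exists_finset v
  choose r hr using fun p : (↥(LinearMap.ker q) × W) =>
    Submodule.mkQ_surjective J (p.1 : R ⧸ J)
  have hrI : ∀ p, r p ∈ I := by
    intro p
    have h2 : q ((p.1 : R ⧸ J)) = 0 := p.1.2
    have h1 : (p.1 : R ⧸ J) = Submodule.Quotient.mk (r p) := (hr p).symm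
    rw [h1, hq, qq_mk] at h2
    exact (Submodule.Quotient.mk_eq_zero I).mp h2
  set K := Submodule.span R ((S.image r : Finset R) : Set R) with hK
  have hKfg : K.FG := ⟨S.image r, rfl⟩
  have hKI : K ≤ I := Submodule.span_le.mpr (by
    intro y hy
    simp only [Finset.coe_image, Set.mem_image, Finset.mem_coe] at hy
    obtain ⟨p, _, rfl⟩ := hy
    exact hrI p)
  refine ⟨J ⊔ K, le_sup_left, sup_le hJ hKI, Submodule.FG.sup hJfg hKfg, ?_⟩
  have hcomp0 : ∀ p ∈ S, ((qq J (J ⊔ K) le_sup_left) ∘ₗ (LinearMap.ker q).subtype) p.1 = 0 := by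
    intro p hp
    have h1 : (p.1 : R ⧸ J) = Submodule.Quotient.mk (r p) := (hr p).symm
    simp only [LinearMap.comp_apply, Submodule.coe_subtype, h1, qq_mk]
    rw [Submodule.Quotient.mk_eq_zero]
    exact Submodule.mem_sup_right (Submodule.subset_span
      (by simp only [Finset.coe_image, Set.mem_image, Finset.mem_coe]; exact ⟨p, hp, rfl⟩))
  rw [← hv, ← rTensor_comp_apply, hS, map_sum]
  refine Finset.sum_eq_zero (fun p hp => ?_)
  rw [rTensor_tmul, hcomp0 p hp, zero_tmul]

/-- vanishing for all nonnil ideals follows from the finitely generated nonnil case -/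
theorem TorV.of_nonnil_ideal {X Y Z : Type u} [AddCommGroup X] [AddCommGroup Y] [AddCommGroup Z]
    [Module R X] [Module R Y] [Module R Z] {d₂ : X →ₗ[R] Y} {d₁ : Y →ₗ[R] Z}
    (hfg : ∀ J : Ideal R, J.IsNonnil → J.FG → TorV d₂ d₁ (R ⧸ J))
    {I : Ideal R} (hI : I.IsNonnil) : TorV d₂ d₁ (R ⧸ I) := by
  obtain ⟨x, hxI, hxnil⟩ := SetLike.not_le_iff_exists.mp hI
  intro z hz
  set J₀ := Ideal.span ({x} : Set R) with hJ₀
  have hJ₀I : J₀ ≤ I := by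
    rw [hJ₀, Ideal.span_le]
    simpa using hxI
  have hJ₀fg : J₀.FG := ⟨{x}, by simp [hJ₀]⟩
  obtain ⟨z₀, hz₀⟩ := LinearMap.rTensor_surjective Y (qq_surjective hJ₀I) z
  have hu : (qq J₀ I hJ₀I).rTensor Z (d₁.lTensor _ z₀) = 0 := by
    rw [← lr_comm, hz₀, hz]
  obtain ⟨J₁, hJJ₁, hJ₁I, hJ₁fg, h1⟩ := qq_exists_fg_kill hJ₀I hJ₀fg _ hu
  have hJ₁nonnil : Ideal.IsNonnil J₁ := by
    intro hle
    exact hxnil (hle (hJJ₁ (Ideal.subset_span rfl)))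
  obtain ⟨w, hw⟩ := hfg J₁ hJ₁nonnil hJ₁fg ((qq J₀ J₁ hJJ₁).rTensor Y z₀) (by
    rw [lr_comm]; exact h1)
  refine ⟨(qq J₁ I hJ₁I).rTensor X w, ?_⟩
  rw [lr_comm, hw, ← rTensor_comp_apply, qq_comp, hz₀]

end PhiAux
end Aux

section Bridge
open CategoryTheory TensorProduct

variable {R : Type u} [CommRing R] {M : Type u} [AddCommGroup M] [Module R M]

theorem PhiAux.subsingleton_tor_iff (P : ProjectiveResolution (ModuleCat.of R M))
    (T : Type u) [AddCommGroup T] [Module R T] (n : ℕ) :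
    Subsingleton (((Tor (ModuleCat.{u} R) (n+1)).obj (ModuleCat.of R T)).obj (ModuleCat.of R M)) ↔
      PhiAux.TorV (R := R) (P.complex.d (n+2) (n+1)).hom
        (P.complex.d (n+1) n).hom T := by
  let F := (MonoidalCategory.tensoringLeft (ModuleCat.{u} R)).obj (ModuleCat.of R T)
  let K := (F.mapHomologicalComplex _).obj P.complex
  have e1 : (((Tor (ModuleCat.{u} R) (n+1)).obj (ModuleCat.of R T)).obj (ModuleCat.of R M)) ≅
      K.homology (n+1) := P.isoLeftDerivedObj F (n+1)
  have h1 : Subsingleton (((Tor (ModuleCat.{u} R) (n+1)).obj (ModuleCat.of R T)).obj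
      (ModuleCat.of R M)) ↔ Subsingleton (K.homology (n+1)) :=
    Equiv.subsingleton_congr ((forget _).mapIso e1).toEquiv
  rw [h1]
  have h2 : Subsingleton (K.homology (n+1)) ↔ K.ExactAt (n+1) := by
    rw [HomologicalComplex.exactAt_iff_isZero_homology]
    constructor
    · intro h
      exact ModuleCat.isZero_of_subsingleton _
    · intro h
      haveI : Subsingleton (ModuleCat.of R PUnit) := inferInstanceAs (Subsingleton PUnit)
      exact (((forget _).mapIso (h.iso (ModuleCat.isZero_of_subsingleton
        (ModuleCat.of R PUnit)))).toEquiv).subsingleton_congr.mpr inferInstance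
  rw [h2, K.exactAt_iff' (n+2) (n+1) n (by simp) (by simp),
    ShortComplex.moduleCat_exact_iff]
  exact Iff.rfl

end Bridge

/-- Over a φ-ring, `M` is strongly φ-flat iff `Tor_n(R/I, M) = 0` for every
nonnil ideal `I` and every `n ≥ 1`, iff the same holds for finitely generated nonnil ideals. -/

theorem statement0 (R : Type u) [CommRing R] (hR : IsPhiRing R)
    (M : Type u) [AddCommGroup M] [Module R M] :
    (IsStronglyPhiFlat R M ↔
      ∀ I : Ideal R, I.IsNonnil → ∀ n : ℕ, 1 ≤ n →
        Subsingleton (((Tor (ModuleCat.{u} R) n).obj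
          (ModuleCat.of R (R ⧸ I))).obj (ModuleCat.of R M))) ∧
    (IsStronglyPhiFlat R M ↔
      ∀ I : Ideal R, I.IsNonnil → I.FG → ∀ n : ℕ, 1 ≤ n →
        Subsingleton (((Tor (ModuleCat.{u} R) n).obj
          (ModuleCat.of R (R ⧸ I))).obj (ModuleCat.of R M))) := by
  classical
  obtain ⟨P⟩ := (HasProjectiveResolution.out (Z := ModuleCat.of R M))
  haveI flatP : ∀ k : ℕ, Module.Flat R ↥(P.complex.X k) := by
    intro k
    haveI : CategoryTheory.Projective (ModuleCat.of R ↥(P.complex.X k)) := by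
      rw [ModuleCat.of_coe]
      exact P.projective k
    haveI : Module.Projective R ↥(P.complex.X k) := (IsProjective.iff_projective _).mpr this
    exact Module.Flat.of_projective
  have hd : ∀ n : ℕ, (P.complex.d (n+1) n).hom ∘ₗ
      (P.complex.d (n+2) (n+1)).hom = 0 := fun n => by
    rw [← ModuleCat.hom_comp, P.complex.d_comp_d (n+2) (n+1) n, ModuleCat.hom_zero]
  -- `R ⧸ I` is φ-torsion for nonnil `I`
  have hqt : ∀ I : Ideal R, I.IsNonnil → IsPhiTorsion R (R ⧸ I) := by
    intro I hI t
    refine ⟨I, hI, fun a ha => ?_⟩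
    obtain ⟨r, rfl⟩ := Submodule.Quotient.mk_surjective I t
    rw [← Submodule.Quotient.mk_smul, Submodule.Quotient.mk_eq_zero]
    rw [smul_eq_mul]
    exact Ideal.mul_mem_right r I ha
  have hAB : IsStronglyPhiFlat R M →
      (∀ I : Ideal R, I.IsNonnil → ∀ n : ℕ, 1 ≤ n →
        Subsingleton (((Tor (ModuleCat.{u} R) n).obj
          (ModuleCat.of R (R ⧸ I))).obj (ModuleCat.of R M))) := by
    intro hA I hI n hn
    exact hA (R ⧸ I) (hqt I hI) n hn
  have hCA : (∀ I : Ideal R, I.IsNonnil → I.FG → ∀ n : ℕ, 1 ≤ n →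
      Subsingleton (((Tor (ModuleCat.{u} R) n).obj
        (ModuleCat.of R (R ⧸ I))).obj (ModuleCat.of R M))) → IsStronglyPhiFlat R M := by
    intro hC T _ _ hT n hn
    obtain ⟨m, rfl⟩ : ∃ m, n = m + 1 := ⟨n - 1, by omega⟩
    rw [PhiAux.subsingleton_tor_iff P T m]
    refine PhiAux.TorV.of_phiTorsion (hd m) hT (fun I hI => ?_)
    refine PhiAux.TorV.of_nonnil_ideal (fun J hJ hJfg => ?_) hI
    exact (PhiAux.subsingleton_tor_iff P (R ⧸ J) m).mp (hC J hJ hJfg (m+1) (by omega))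
  refine ⟨⟨fun h => hAB h, fun h => hCA (fun I hI _ => h I hI)⟩,
    ⟨fun h => fun I hI _ => hAB h I hI, hCA⟩⟩
end

section
/- Let R be a ZN-ring (a commutative ring in which the set of zero-divisors equals the nilradical Nil(R)). Then an R-module M is φ-flat if and only if M is strongly φ-flat; that is, Tor_1^R(T, M) = 0 for every φ-torsion R-module T implies Tor_n^R(T, M) = 0 for every φ-torsion R-module T and every n ≥ 1. -/
open CategoryTheory

universe u

noncomputable section StatementFourAux
namespace Statement4Aux

open CategoryTheory HomologicalComplex CategoryTheory.Limits

variable {R : Type u} [CommRing R]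

lemma reg_of_not_nil (hR : IsZNRing R) {s : R} (hs : s ∉ nilradical R) :
    ∀ y : R, s * y = 0 → y = 0 := by
  intro y hy
  by_contra h
  exact hs ((Set.ext_iff.mp hR s).1 ⟨y, h, hy⟩)

lemma not_nil_of_reg (hR : IsZNRing R) {s : R} (hs : ∀ y : R, s * y = 0 → y = 0) :
    s ∉ nilradical R := by
  intro h
  obtain ⟨y, hy0, hy⟩ := (Set.ext_iff.mp hR s).2 h
  exact hy0 (hs y hy)

/-- The complex `N ⊗ P` for a fixed complex `P`. -/
abbrev tcx (P : HomologicalComplex (ModuleCat.{u} R) (ComplexShape.down ℕ))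
    (N : ModuleCat.{u} R) : HomologicalComplex (ModuleCat.{u} R) (ComplexShape.down ℕ) :=
  (((MonoidalCategory.tensoringLeft (ModuleCat.{u} R)).obj N).mapHomologicalComplex _).obj P

/-- The morphism of complexes `A ⊗ P ⟶ B ⊗ P` induced by `f : A ⟶ B`. -/
def tcxMap (P : HomologicalComplex (ModuleCat.{u} R) (ComplexShape.down ℕ))
    {A B : ModuleCat.{u} R} (f : A ⟶ B) : tcx P A ⟶ tcx P B :=
  (NatTrans.mapHomologicalComplex
    ((MonoidalCategory.tensoringLeft (ModuleCat.{u} R)).map f) _).app P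

variable (P : HomologicalComplex (ModuleCat.{u} R) (ComplexShape.down ℕ))

/-- Tensoring an exact complex with a flat module preserves exactness. -/
lemma exact_tcx_of_flat (hP : ∀ n : ℕ, P.ExactAt (n + 1))
    (N : ModuleCat.{u} R) [Module.Flat R N] (n : ℕ) :
    IsZero ((tcx P N).homology (n + 1)) := by
  rw [← exactAt_iff_isZero_homology]
  rw [exactAt_iff' _ (n + 2) (n + 1) n (by simp) (by simp)]
  rw [ShortComplex.ShortExact.moduleCat_exact_iff_function_exact]
  have h := hP n
  rw [exactAt_iff' _ (n + 2) (n + 1) n (by simp) (by simp)] at h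
  rw [ShortComplex.ShortExact.moduleCat_exact_iff_function_exact] at h
  exact Module.Flat.lTensor_exact N h

/-- The long exact homology sequence argument: if `0 → A → B → C → 0` is exact and two
corner homologies vanish, so does the middle one. -/
lemma les_step {A B C : ModuleCat.{u} R} (f : A ⟶ B) (g : B ⟶ C)
    (hflat : ∀ i : ℕ, Module.Flat R (P.X i))
    (hf : Function.Injective f) (hg : Function.Surjective g)
    (hfg : Function.Exact f g) (n : ℕ)
    (hB : IsZero ((tcx P B).homology (n + 1))) (hA : IsZero ((tcx P A).homology n)) :
    IsZero ((tcx P C).homology (n + 1)) := by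
  have hzero : tcxMap P f ≫ tcxMap P g = 0 := by
    ext i : 1
    apply ModuleCat.hom_ext
    show LinearMap.comp (LinearMap.rTensor (P.X i) g.hom) (LinearMap.rTensor (P.X i) f.hom) = 0
    rw [← LinearMap.rTensor_comp]
    have : (LinearMap.comp g.hom f.hom) = 0 := by
      ext x; exact hfg.apply_apply_eq_zero x
    rw [this, LinearMap.rTensor_zero]
  set S : ShortComplex (HomologicalComplex (ModuleCat.{u} R) (ComplexShape.down ℕ)) :=
    ShortComplex.mk _ _ hzero with hS_def
  have hS : S.ShortExact := by
    apply shortExact_of_degreewise_shortExact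
    intro i
    haveI := hflat i
    exact
      { exact := by
          rw [ShortComplex.ShortExact.moduleCat_exact_iff_function_exact]
          exact Module.Flat.rTensor_exact (P.X i) hfg
        mono_f := (ModuleCat.mono_iff_injective _).2
          (Module.Flat.rTensor_preserves_injective_linearMap f.hom hf)
        epi_g := (ModuleCat.epi_iff_surjective _).2
          (LinearMap.rTensor_surjective (P.X i) hg) }
  have h3 := hS.homology_exact₃ (n + 1) n (by simp)
  exact h3.isZero_X₂ (hB.eq_of_src _ _) (hA.eq_of_tgt _ _)

section main
variable (hR : IsZNRing R)
variable {T : Type u} [AddCommGroup T] [Module R T] (hT : IsPhiTorsion R T)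

include hR hT

/-- Packaged data for the two short exact sequences used in the induction. -/
lemma exists_ses : ∃ (F₀ : Type u) (_ : AddCommGroup F₀) (_ : Module R F₀)
    (K : Type u) (_ : AddCommGroup K) (_ : Module R K)
    (D : (T →₀ R) →ₗ[R] (T →₀ R)) (q : (T →₀ R) →ₗ[R] F₀)
    (ι : K →ₗ[R] F₀) (p : F₀ →ₗ[R] T),
    IsPhiTorsion R K ∧
    Function.Injective D ∧ Function.Surjective q ∧ Function.Exact D q ∧
    Function.Injective ι ∧ Function.Surjective p ∧ Function.Exact ι p := by
  classical
  have hsel : ∀ t : T, ∃ s : R, s ∉ nilradical R ∧ s • t = 0 := by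
    intro t
    obtain ⟨I, hI, hann⟩ := hT t
    obtain ⟨s, hsI, hs⟩ := SetLike.not_le_iff_exists.1 hI
    exact ⟨s, hs, hann s hsI⟩
  choose s hsnil hskill using hsel
  have hreg : ∀ t : T, ∀ y : R, s t * y = 0 → y = 0 := fun t => reg_of_not_nil hR (hsnil t)
  set D : (T →₀ R) →ₗ[R] (T →₀ R) :=
    Finsupp.lsum ℕ (fun t => s t • (Finsupp.lsingle t : R →ₗ[R] (T →₀ R))) with hD_def
  have hDs : ∀ (t : T) (r : R), D (Finsupp.single t r) = Finsupp.single t (s t * r) := by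
    intro t r
    rw [hD_def, Finsupp.lsum_single]
    simp [Finsupp.smul_single, smul_eq_mul]
  have hD : ∀ (φ : T →₀ R) (t' : T), D φ t' = s t' * φ t' := by
    intro φ t'
    rw [hD_def, Finsupp.lsum_apply, Finsupp.sum_apply]
    rw [Finsupp.sum]
    have : ∀ t ∈ φ.support, ((s t • (Finsupp.lsingle t : R →ₗ[R] (T →₀ R))) (φ t)) t'
        = if t = t' then s t * φ t else 0 := by
      intro t _
      rw [LinearMap.smul_apply, Finsupp.lsingle_apply, Finsupp.smul_apply,
        Finsupp.single_apply, smul_eq_mul]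
      by_cases h : t = t' <;> simp [h]
    rw [Finset.sum_congr rfl this, Finset.sum_ite_eq' φ.support t' (fun t => s t * φ t)]
    by_cases h : t' ∈ φ.support
    · simp [h]
    · simp [h, Finsupp.notMem_support_iff.1 h]
  have hDinj : Function.Injective D := by
    rw [injective_iff_map_eq_zero]
    intro φ hφ
    ext t'
    have := congrArg (fun ψ : T →₀ R => ψ t') hφ
    simp only [Finsupp.coe_zero, Pi.zero_apply] at this
    rw [hD φ t'] at this
    exact hreg t' _ this
  set F₀ := (T →₀ R) ⧸ LinearMap.range D with hF₀_def
  set q : (T →₀ R) →ₗ[R] F₀ := (LinearMap.range D).mkQ with hq_def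
  set π : (T →₀ R) →ₗ[R] T := Finsupp.linearCombination R (id : T → T) with hπ_def
  have hπD : π ∘ₗ D = 0 := by
    apply Finsupp.lhom_ext
    intro t r
    rw [LinearMap.comp_apply, hDs t r, LinearMap.zero_apply, hπ_def,
      Finsupp.linearCombination_single]
    rw [id_eq, mul_comm, mul_smul]
    rw [hskill t, smul_zero]
  have hrange_le : LinearMap.range D ≤ LinearMap.ker π := by
    rintro _ ⟨φ, rfl⟩
    exact LinearMap.congr_fun hπD φ
  set p : F₀ →ₗ[R] T := (LinearMap.range D).liftQ π hrange_le with hp_def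
  have hπsurj : Function.Surjective π := by
    intro t
    exact ⟨Finsupp.single t 1, by rw [hπ_def, Finsupp.linearCombination_single, one_smul, id_eq]⟩
  have hpsurj : Function.Surjective p := by
    intro t
    obtain ⟨φ, hφ⟩ := hπsurj t
    exact ⟨q φ, hφ⟩
  have hmulreg : ∀ (S : Finset T), ∀ y : R, (∏ t ∈ S, s t) * y = 0 → y = 0 := by
    intro S
    induction S using Finset.induction_on with
    | empty => intro y hy; simpa using hy
    | insert _ _ hnot ih =>
        intro y hy
        rw [Finset.prod_insert hnot, mul_assoc] at hy
        exact ih _ (hreg _ _ hy)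
  have hF₀tors : IsPhiTorsion R F₀ := by
    intro x
    obtain ⟨φ, rfl⟩ := (LinearMap.range D).mkQ_surjective x
    set u := ∏ t ∈ φ.support, s t with hu_def
    refine ⟨Ideal.span {u}, ?_, ?_⟩
    · intro hle
      exact not_nil_of_reg hR (hmulreg φ.support) (hle (Ideal.mem_span_singleton_self u))
    · have hukill : u • (LinearMap.range D).mkQ φ = 0 := by
        rw [← map_smul, Submodule.mkQ_apply, Submodule.Quotient.mk_eq_zero]
        refine ⟨φ.support.sum (fun t => Finsupp.single t
          ((∏ t' ∈ φ.support.erase t, s t') * φ t)), ?_⟩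
        ext t'
        rw [hD]
        have happ : (φ.support.sum (fun t => Finsupp.single t
            ((∏ t' ∈ φ.support.erase t, s t') * φ t))) t'
            = if t' ∈ φ.support then (∏ t'' ∈ φ.support.erase t', s t'') * φ t' else 0 := by
          rw [Finsupp.finset_sum_apply]
          rw [Finset.sum_congr rfl (fun t _ => Finsupp.single_apply)]
          exact Finset.sum_ite_eq' φ.support t' _
        rw [happ]
        by_cases h : t' ∈ φ.support
        · rw [if_pos h]
          rw [Finsupp.smul_apply, smul_eq_mul, ← mul_assoc, Finset.mul_prod_erase _ _ h]
        · rw [if_neg h, mul_zero, Finsupp.smul_apply, Finsupp.notMem_support_iff.1 h,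
            smul_zero]
      intro a ha
      obtain ⟨c, rfl⟩ := Ideal.mem_span_singleton'.1 ha
      rw [mul_smul, hukill, smul_zero]
  set K := LinearMap.ker p with hK_def
  have hKtors : IsPhiTorsion R K := by
    intro k
    obtain ⟨I, hI, hkill⟩ := hF₀tors (k : F₀)
    exact ⟨I, hI, fun a ha => Subtype.ext (by simpa using hkill a ha)⟩
  have hexDq : Function.Exact D q :=
    LinearMap.exact_iff.mpr (Submodule.ker_mkQ _)
  have hexιp : Function.Exact K.subtype p :=
    LinearMap.exact_iff.mpr (Submodule.range_subtype K).symm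
  exact ⟨F₀, inferInstance, inferInstance, K, inferInstance, inferInstance, D, q,
    K.subtype, p, hKtors, hDinj, Submodule.mkQ_surjective _, hexDq,
    Submodule.injective_subtype _, hpsurj, hexιp⟩

end main

/-- The main induction: all higher homologies of `T ⊗ P` vanish for φ-torsion `T`. -/
lemma isZero_homology_tcx (hR : IsZNRing R)
    (hP : ∀ n : ℕ, P.ExactAt (n + 1)) (hflat : ∀ i : ℕ, Module.Flat R (P.X i))
    (hyp : ∀ (T : Type u) [AddCommGroup T] [Module R T], IsPhiTorsion R T →
        IsZero ((tcx P (ModuleCat.of R T)).homology 1)) (n : ℕ) :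
    ∀ (T : Type u) [AddCommGroup T] [Module R T], IsPhiTorsion R T →
        IsZero ((tcx P (ModuleCat.of R T)).homology (n + 1)) := by
  induction n with
  | zero => exact hyp
  | succ n ih =>
      intro T _ _ hT
      obtain ⟨F₀, _, _, K, _, _, D, q, ι, p, hKtors, hDinj, hqsurj, hexDq,
        hιinj, hpsurj, hexιp⟩ := exists_ses hR hT
      haveI : Module.Flat R (ModuleCat.of R (T →₀ R) : Type u) :=
        (inferInstance : Module.Flat R (T →₀ R))
      have hF0 : IsZero ((tcx P (ModuleCat.of R F₀)).homology (n + 1 + 1)) :=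
        les_step P (A := ModuleCat.of R (T →₀ R)) (B := ModuleCat.of R (T →₀ R))
          (C := ModuleCat.of R F₀) (ModuleCat.ofHom D) (ModuleCat.ofHom q) hflat hDinj hqsurj hexDq (n + 1)
          (exact_tcx_of_flat P hP _ (n + 1)) (exact_tcx_of_flat P hP _ n)
      exact les_step P (A := ModuleCat.of R K) (B := ModuleCat.of R F₀)
        (C := ModuleCat.of R T) (ModuleCat.ofHom ι) (ModuleCat.ofHom p) hflat hιinj hpsurj hexιp (n + 1)
        hF0 (ih K hKtors)

lemma subsingleton_of_isZero {X : ModuleCat.{u} R} (h : IsZero X) : Subsingleton X := by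
  have e : X ≅ ModuleCat.of R PUnit :=
    h.iso (ModuleCat.isZero_of_subsingleton _)
  exact ⟨fun a b => by
    have ha : e.inv (e.hom a) = a := e.hom_inv_id_apply a
    have hb : e.inv (e.hom b) = b := e.hom_inv_id_apply b
    rw [← ha, ← hb, Subsingleton.elim (e.hom a) (e.hom b)]⟩

end Statement4Aux
end StatementFourAux

/-- Over a ZN-ring, an `R`-module `M` is φ-flat iff it is strongly φ-flat. -/
theorem statement4 (R : Type u) [CommRing R] (hR : IsZNRing R)
    (M : Type u) [AddCommGroup M] [Module R M] :
    (∀ (T : Type u) [AddCommGroup T] [Module R T], IsPhiTorsion R T →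
      Subsingleton (((Tor (ModuleCat.{u} R) 1).obj
        (ModuleCat.of R T)).obj (ModuleCat.of R M))) ↔
    IsStronglyPhiFlat R M := by
  constructor
  · intro h1
    obtain ⟨P⟩ : Nonempty (ProjectiveResolution (ModuleCat.of R M)) :=
      HasProjectiveResolution.out
    have hflat : ∀ i : ℕ, Module.Flat R (P.complex.X i) := by
      intro i
      haveI : Module.Projective R (P.complex.X i) :=
        (IsProjective.iff_projective _).mpr (P.projective i)
      infer_instance
    have hP : ∀ n : ℕ, P.complex.ExactAt (n + 1) := P.complex_exactAt_succ
    have hyp : ∀ (T : Type u) [AddCommGroup T] [Module R T], IsPhiTorsion R T →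
        Limits.IsZero ((Statement4Aux.tcx P.complex (ModuleCat.of R T)).homology 1) := by
      intro T _ _ hT
      haveI := h1 T hT
      have hz : Limits.IsZero (((Tor (ModuleCat.{u} R) 1).obj
          (ModuleCat.of R T)).obj (ModuleCat.of R M)) :=
        ModuleCat.isZero_of_subsingleton _
      exact hz.of_iso (P.isoLeftDerivedObj
        ((MonoidalCategory.tensoringLeft (ModuleCat.{u} R)).obj (ModuleCat.of R T)) 1).symm
    intro T _ _ hT n hn
    obtain ⟨m, rfl⟩ : ∃ m, n = m + 1 := ⟨n - 1, (Nat.succ_pred_eq_of_pos hn).symm⟩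
    have hz := Statement4Aux.isZero_homology_tcx P.complex hR hP hflat hyp m T hT
    have hz' : Limits.IsZero (((Tor (ModuleCat.{u} R) (m + 1)).obj
        (ModuleCat.of R T)).obj (ModuleCat.of R M)) :=
      hz.of_iso (P.isoLeftDerivedObj
        ((MonoidalCategory.tensoringLeft (ModuleCat.{u} R)).obj (ModuleCat.of R T)) (m + 1))
    exact Statement4Aux.subsingleton_of_isZero hz'
  · intro h T _ _ hT
    exact h T hT 1 (le_refl 1)
end

section
/- Let R be a φ-ring. Then every R-module is strongly φ-flat if and only if R/Nil(R) is a field (equivalently, R is a φ-von Neumann regular ring, equivalently the φ-weak global dimension of R is 0). -/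
open CategoryTheory

universe u

section Aux

open CategoryTheory.Limits CategoryTheory.MonoidalCategory Pointwise

variable {R : Type u} [CommRing R]

private lemma ModuleCat.subsingleton_of_isZero' {Y : ModuleCat.{u} R} (h : IsZero Y) :
    Subsingleton Y := by
  refine ⟨fun a b => ?_⟩
  have h0 : (𝟙 Y : Y ⟶ Y) = 0 := h.eq_of_src _ _
  have : ∀ c : Y, c = 0 := fun c => by
    conv_lhs => rw [← ModuleCat.id_apply _ c, h0]
    rfl
  rw [this a, this b]


private lemma aux_backward (T M : Type u) [AddCommGroup T] [Module R T] [Subsingleton T]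
    [AddCommGroup M] [Module R M] (n : ℕ) :
    Subsingleton (((Tor (ModuleCat.{u} R) n).obj (ModuleCat.of R T)).obj (ModuleCat.of R M)) := by
  obtain ⟨P⟩ := (HasProjectiveResolution.out (Z := ModuleCat.of R M))
  set X : ModuleCat.{u} R := ModuleCat.of R T with hX
  set F : ModuleCat.{u} R ⥤ ModuleCat.{u} R := (tensoringLeft (ModuleCat.{u} R)).obj X with hF
  set K := (F.mapHomologicalComplex (ComplexShape.down ℕ)).obj P.complex with hK
  have hsub : ∀ N : ModuleCat.{u} R, Subsingleton (TensorProduct R T N) := fun N =>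
    subsingleton_of_forall_eq 0 (fun z => by
      induction z using TensorProduct.induction_on with
      | zero => rfl
      | tmul t m => rw [Subsingleton.elim t (0 : T), TensorProduct.zero_tmul]
      | add a b ha hb => rw [ha, hb, add_zero])
  have hex : K.ExactAt n := by
    rw [HomologicalComplex.exactAt_iff, ShortComplex.moduleCat_exact_iff]
    haveI : Subsingleton ((K.sc n).X₂) := hsub (P.complex.X n)
    intro z hz
    exact ⟨0, by rw [map_zero]; exact Subsingleton.elim _ _⟩
  have hzero : IsZero (K.homology n) := (K.exactAt_iff_isZero_homology n).1 hex
  haveI : Subsingleton ((HomologicalComplex.homologyFunctor (ModuleCat.{u} R)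
      (ComplexShape.down ℕ) n).obj ((F.mapHomologicalComplex (ComplexShape.down ℕ)).obj
      P.complex)) := ModuleCat.subsingleton_of_isZero' hzero
  exact Equiv.subsingleton (P.isoLeftDerivedObj F n).toLinearEquiv.toEquiv

private lemma aux_forward (hR : (nilradical R).IsPrime) (x : R) (hx : x ∉ nilradical R)
    (h : Subsingleton (((Tor (ModuleCat.{u} R) 1).obj
        (ModuleCat.of R (R ⧸ Ideal.span {x}))).obj
        (ModuleCat.of R (R ⧸ Ideal.span {x})))) :
    IsUnit (Ideal.Quotient.mk (nilradical R) x) := by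
  set J := Ideal.span ({x} : Set R) with hJdef
  set X : ModuleCat.{u} R := ModuleCat.of R (R ⧸ J) with hX
  obtain ⟨P⟩ := (HasProjectiveResolution.out (Z := X))
  set F : ModuleCat.{u} R ⥤ ModuleCat.{u} R := (tensoringLeft (ModuleCat.{u} R)).obj X with hF
  set K := (F.mapHomologicalComplex (ComplexShape.down ℕ)).obj P.complex with hK
  have e : ((Tor (ModuleCat.{u} R) 1).obj X).obj X ≅ K.homology 1 := P.isoLeftDerivedObj _ 1
  haveI hs : Subsingleton (K.homology 1) := Equiv.subsingleton e.symm.toLinearEquiv.toEquiv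
  have hexact : K.ExactAt 1 := (HomologicalComplex.exactAt_iff_isZero_homology K 1).2
    (ModuleCat.isZero_of_subsingleton _)
  rw [K.exactAt_iff' 2 1 0 (by simp) (by simp)] at hexact
  rw [ShortComplex.moduleCat_exact_iff] at hexact
  -- the generator of X
  set T1 : R ⧸ J := Ideal.Quotient.mk J 1 with hT1
  have hsmulT1 : ∀ r : R, r • T1 = Ideal.Quotient.mk J r := fun r => by
    rw [hT1, Algebra.smul_def, Ideal.Quotient.algebraMap_eq, ← map_mul, mul_one]
  have hxT1 : x • T1 = 0 := by
    rw [hsmulT1, Ideal.Quotient.eq_zero_iff_mem]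
    exact Ideal.mem_span_singleton_self x
  -- lift 1 via π
  have hπ : Function.Surjective (P.π.f 0) := (ModuleCat.epi_iff_surjective _).1 inferInstance
  obtain ⟨p₀, hp₀⟩ := hπ (show ((ChainComplex.single₀ (ModuleCat.{u} R)).obj X).X 0 from T1)
  have hker : (P.π.f 0) (x • p₀) = 0 := by
    rw [map_smul, hp₀]
    exact hxT1
  have hex0 := P.exact₀
  rw [ShortComplex.moduleCat_exact_iff] at hex0
  obtain ⟨p₁, hp₁⟩ := hex0 (x • p₀) hker
  -- the cycle
  have hcyc : ∀ (N : ModuleCat.{u} R) (z : TensorProduct R (R ⧸ J) N),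
      ∃ q : N, z = T1 ⊗ₜ[R] q := by
    intro N z
    induction z using TensorProduct.induction_on with
    | zero => exact ⟨0, (TensorProduct.tmul_zero _ _).symm⟩
    | tmul a n =>
      obtain ⟨r, rfl⟩ := Ideal.Quotient.mk_surjective a
      exact ⟨r • n, by rw [← hsmulT1, TensorProduct.smul_tmul]⟩
    | add z₁ z₂ h₁ h₂ =>
      obtain ⟨q₁, rfl⟩ := h₁
      obtain ⟨q₂, rfl⟩ := h₂
      exact ⟨q₁ + q₂, (TensorProduct.tmul_add _ _ _).symm⟩
  have ht : (K.d 1 0) (show (K.X 1) from (T1 ⊗ₜ[R] p₁ : TensorProduct R (R ⧸ J) (P.complex.X 1))) = 0 := by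
    show (F.map (P.complex.d 1 0)) (T1 ⊗ₜ[R] p₁) = 0
    rw [show (F.map (P.complex.d 1 0)) (T1 ⊗ₜ[R] p₁) = T1 ⊗ₜ[R] (P.complex.d 1 0 p₁) from
      ModuleCat.MonoidalCategory.whiskerLeft_apply _ _ _ _]
    rw [hp₁, TensorProduct.tmul_smul, TensorProduct.smul_tmul', hxT1, TensorProduct.zero_tmul]
  obtain ⟨s, hs'⟩ := hexact (T1 ⊗ₜ[R] p₁) ht
  obtain ⟨q, rfl⟩ := hcyc (P.complex.X 2) s
  have hs'' : T1 ⊗ₜ[R] (P.complex.d 2 1 q) = T1 ⊗ₜ[R] p₁ := by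
    rw [← hs']
    exact (ModuleCat.MonoidalCategory.whiskerLeft_apply X (P.complex.d 2 1) T1 q).symm
  have h0 : T1 ⊗ₜ[R] (p₁ - P.complex.d 2 1 q) = 0 := by
    rw [TensorProduct.tmul_sub, hs'', sub_self]
  -- membership in J • ⊤
  have hmem : (p₁ - P.complex.d 2 1 q) ∈ J • (⊤ : Submodule R (P.complex.X 1)) := by
    have := congrArg (TensorProduct.quotTensorEquivQuotSMul (P.complex.X 1) J) h0
    rw [hT1, TensorProduct.quotTensorEquivQuotSMul_mk_tmul, map_zero, one_smul,
      Submodule.Quotient.mk_eq_zero] at this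
    exact this
  rw [hJdef, Submodule.ideal_span_singleton_smul] at hmem
  obtain ⟨p₁', -, hp₁'⟩ := Set.mem_smul_set.1 hmem
  -- x • (p₀ - d p₁') = 0
  have hdd : (P.complex.d 1 0) (P.complex.d 2 1 q) = 0 := by
    have := P.complex.d_comp_d 2 1 0
    calc (P.complex.d 1 0) (P.complex.d 2 1 q)
        = (P.complex.d 2 1 ≫ P.complex.d 1 0) q := rfl
      _ = 0 := by rw [this]; rfl
  have hxp : x • (p₀ - P.complex.d 1 0 p₁') = 0 := by
    have h1 : P.complex.d 1 0 p₁ = x • p₀ := hp₁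
    have h2 : p₁ = P.complex.d 2 1 q + x • p₁' := by
      rw [hp₁']; abel
    rw [smul_sub]
    rw [h2, map_add, hdd, map_smul] at h1
    rw [← h1]
    abel
  set p : P.complex.X 0 := p₀ - P.complex.d 1 0 p₁' with hpdef
  have hπp : (P.π.f 0) p = T1 := by
    rw [hpdef, map_sub, hp₀]
    have : (P.π.f 0) (P.complex.d 1 0 p₁') = 0 := by
      calc (P.π.f 0) (P.complex.d 1 0 p₁') = (P.complex.d 1 0 ≫ P.π.f 0) p₁' := rfl
        _ = 0 := by rw [P.complex_d_comp_π_f_zero]; rfl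
    rw [this, sub_zero]
  -- projectivity: coordinates
  have hproj : Module.Projective R (P.complex.X 0) := by
    have : Projective (ModuleCat.of R (P.complex.X 0)) := P.projective 0
    exact (IsProjective.iff_projective _).2 this
  obtain ⟨s0, hs0⟩ := Module.projective_def.1 hproj
  have hxf : x • (s0 p) = 0 := by rw [← map_smul, hxp, map_zero]
  have hfi : ∀ i, (s0 p) i ∈ nilradical R := by
    intro i
    have hx0 : x * (s0 p) i = 0 := by
      have := congrArg (fun g => g i) hxf
      simpa [Finsupp.smul_apply, smul_eq_mul] using this
    have : x * (s0 p) i ∈ nilradical R := by rw [hx0]; exact Ideal.zero_mem _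
    exact (hR.mem_or_mem this).resolve_left hx
  have hp_eq : (s0 p).sum (fun i c => c • i) = p := by
    have := hs0 p
    rwa [Finsupp.linearCombination_apply] at this
  have hmem1 : T1 ∈ (nilradical R) • (⊤ : Submodule R (R ⧸ J)) := by
    rw [← hπp, ← hp_eq, map_finsuppSum]
    refine Submodule.sum_mem _ (fun i _ => ?_)
    dsimp only
    rw [map_smul]
    exact Submodule.smul_mem_smul (hfi i) trivial
  have hextract : ∀ y ∈ (nilradical R) • (⊤ : Submodule R (R ⧸ J)),
      ∃ n ∈ nilradical R, Ideal.Quotient.mk J n = y := by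
    intro y hy
    refine Submodule.smul_induction_on hy ?_ ?_
    · intro r hr z _
      obtain ⟨w, rfl⟩ := Ideal.Quotient.mk_surjective z
      refine ⟨r * w, Ideal.mul_mem_right _ _ hr, ?_⟩
      rw [map_mul]
      rw [Algebra.smul_def, Ideal.Quotient.algebraMap_eq]
    · rintro a b ⟨na, hna, ha⟩ ⟨nb, hnb, hb⟩
      exact ⟨na + nb, add_mem hna hnb, by rw [map_add, ha, hb]⟩
  obtain ⟨n, hn, hmk⟩ := hextract _ hmem1
  have h1n : 1 - n ∈ J := by
    have : Ideal.Quotient.mk J (1 - n) = 0 := by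
      rw [map_sub, hmk, hT1, map_one, sub_self]
    exact Ideal.Quotient.eq_zero_iff_mem.1 this
  obtain ⟨r, hr⟩ := Ideal.mem_span_singleton'.1 (hJdef ▸ h1n)
  refine IsUnit.of_mul_eq_one (Ideal.Quotient.mk _ r) ?_
  rw [← map_mul, mul_comm, hr, map_sub, map_one,
    Ideal.Quotient.eq_zero_iff_mem.2 hn, sub_zero]

end Aux

/-- For a φ-ring `R`, every `R`-module is strongly φ-flat iff
`R/Nil(R)` is a field (i.e. `R` is φ-von Neumann regular). -/
theorem statement14 (R : Type u) [CommRing R] (hR : IsPhiRing R) :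
    (∀ (M : Type u) [AddCommGroup M] [Module R M], IsStronglyPhiFlat R M) ↔
    IsField (R ⧸ nilradical R) := by
  constructor
  · intro h
    haveI : Nontrivial (R ⧸ nilradical R) := Ideal.Quotient.nontrivial_iff.mpr hR.1.ne_top
    refine ⟨exists_pair_ne _, mul_comm, ?_⟩
    intro a ha
    obtain ⟨x, rfl⟩ := Ideal.Quotient.mk_surjective a
    have hx : x ∉ nilradical R := fun hxx => ha (Ideal.Quotient.eq_zero_iff_mem.2 hxx)
    have htor : IsPhiTorsion R (R ⧸ Ideal.span {x}) := by
      intro t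
      refine ⟨Ideal.span {x}, fun hle => hx (hle (Ideal.mem_span_singleton_self x)), ?_⟩
      intro a ha'
      obtain ⟨w, rfl⟩ := Ideal.Quotient.mk_surjective t
      rw [Algebra.smul_def, Ideal.Quotient.algebraMap_eq, ← map_mul,
        Ideal.Quotient.eq_zero_iff_mem]
      exact Ideal.mul_mem_right _ _ ha'
    have hsub := h (R ⧸ Ideal.span {x}) (R ⧸ Ideal.span {x}) htor 1 le_rfl
    exact (aux_forward hR.1 x hx hsub).exists_right_inv
  · intro hF M _ _ T _ _ hT n hn
    haveI : Subsingleton T := by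
      refine subsingleton_of_forall_eq 0 (fun t => ?_)
      obtain ⟨I, hInn, hann⟩ := hT t
      obtain ⟨y0, hyI, hyn⟩ := SetLike.not_le_iff_exists.1 hInn
      have h1 : Ideal.Quotient.mk (nilradical R) y0 ≠ 0 :=
        fun hc => hyn (Ideal.Quotient.eq_zero_iff_mem.1 hc)
      obtain ⟨b, hb⟩ := hF.mul_inv_cancel h1
      obtain ⟨z, rfl⟩ := Ideal.Quotient.mk_surjective b
      have hnil : IsNilpotent (y0 * z - 1) := by
        have hmem : y0 * z - 1 ∈ nilradical R := by
          rw [← Ideal.Quotient.eq_zero_iff_mem, map_sub, map_one, map_mul, hb, sub_self]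
        exact mem_nilradical.1 hmem
      have hunit : IsUnit (y0 * z) := by
        have := hnil.isUnit_one_add
        simpa using this
      have huy : IsUnit y0 := isUnit_of_mul_isUnit_left hunit
      obtain ⟨u, hu⟩ := huy
      have h0 : (u : R) • t = 0 := by rw [hu]; exact hann y0 hyI
      have hsmul : u⁻¹ • ((u : R) • t) = t := by rw [← Units.smul_def, inv_smul_smul]
      rw [← hsmul, h0, smul_zero]
    exact aux_backward T M n
end

section
/- Let R be an NP-ring, M an R-module and n ≥ 0. Then there exists an exact sequence of R-modules 0 → M → E_0 → E_1 → ... → E_n → 0 with each E_i strongly nonnil-injective if and only if Ext_R^{n+k}(R/I, M) = 0 for every nonnil ideal I of R and every k ≥ 1. -/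
open CategoryTheory

universe u

set_option linter.unusedSectionVars false

section Aux
variable {R : Type u} [CommRing R]

noncomputable section

/-- The key interface: vanishing of `Ext^{n+1}` in terms of a chase condition on a chosen
projective resolution. -/
theorem subsingleton_ext_iff {X : ModuleCat.{u} R} (P : ProjectiveResolution X)
    (Y : ModuleCat.{u} R) (n : ℕ) :
    Subsingleton (((Ext R (ModuleCat.{u} R) (n+1)).obj (Opposite.op X)).obj Y) ↔
    ∀ f : P.complex.X (n+1) ⟶ Y, P.complex.d (n+2) (n+1) ≫ f = 0 →
      ∃ g : P.complex.X n ⟶ Y, P.complex.d (n+1) n ≫ g = f := by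
  have e := ProjectiveResolution.isoExt (R := R) P (n+1) Y
  have h1 : Subsingleton (((Ext R (ModuleCat.{u} R) (n+1)).obj (Opposite.op X)).obj Y) ↔
      Limits.IsZero ((P.complex.linearYonedaObj R Y).homology (n+1)) := by
    rw [← ModuleCat.isZero_iff_subsingleton]
    exact ⟨fun h => h.of_iso e.symm, fun h => h.of_iso e⟩
  rw [h1, ← HomologicalComplex.exactAt_iff_isZero_homology,
    HomologicalComplex.exactAt_iff' _ n (n+1) (n+2)
      (by exact CochainComplex.prev_nat_succ n) (by simp),
    ShortComplex.moduleCat_exact_iff]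
  have hd2 : ∀ f : P.complex.X (n+1) ⟶ Y,
      (P.complex.linearYonedaObj R Y).d (n+1) (n+2) f = P.complex.d (n+2) (n+1) ≫ f := by
    intro f; rw [ChainComplex.linearYonedaObj_d]; rfl
  have hd1 : ∀ g : P.complex.X n ⟶ Y,
      (P.complex.linearYonedaObj R Y).d n (n+1) g = P.complex.d (n+1) n ≫ g := by
    intro g; rw [ChainComplex.linearYonedaObj_d]; rfl
  constructor
  · intro h f hf
    have hf' : (P.complex.linearYonedaObj R Y).d (n+1) (n+2) f = 0 := by
      rw [hd2]; exact hf
    obtain ⟨g, hg⟩ := h f hf'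
    refine ⟨g, ?_⟩
    have : (P.complex.linearYonedaObj R Y).d n (n+1) g = f := hg
    exact (hd1 g).symm.trans this
  · intro h f hf
    have hf' : (P.complex.linearYonedaObj R Y).d (n+1) (n+2) f = 0 := hf
    replace hf' := (hd2 f).symm.trans hf'
    obtain ⟨g, hg⟩ := h f hf'
    refine ⟨g, ?_⟩
    show (P.complex.linearYonedaObj R Y).d n (n+1) g = f
    rw [hd1]; exact hg

/-- The chase condition: vanishing of `Ext^{n+1}(X, Y)` expressed on the resolution `P`. -/
def Chase {X : ModuleCat.{u} R} (P : ProjectiveResolution X) (Y : ModuleCat.{u} R) (n : ℕ) :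
    Prop :=
  ∀ f : P.complex.X (n+1) ⟶ Y, P.complex.d (n+2) (n+1) ≫ f = 0 →
    ∃ g : P.complex.X n ⟶ Y, P.complex.d (n+1) n ≫ g = f

theorem chase_iff {X : ModuleCat.{u} R} (P : ProjectiveResolution X) (Y : ModuleCat.{u} R)
    (n : ℕ) :
    Subsingleton (((Ext R (ModuleCat.{u} R) (n+1)).obj (Opposite.op X)).obj Y) ↔ Chase P Y n :=
  subsingleton_ext_iff P Y n

/-- Factor a map through an injection, given that it lands in the range. -/
theorem factorThruInj {K A B : ModuleCat.{u} R} (i : A ⟶ B) (hi : Function.Injective i)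
    (u : K ⟶ B) (h : ∀ x, ∃ a, i a = u x) : ∃ w : K ⟶ A, w ≫ i = u := by
  refine ⟨ModuleCat.ofHom
          { toFun := fun x => (h x).choose
            map_add' := ?_
            map_smul' := ?_ }, ?_⟩
  · intro x y
    apply hi
    dsimp only []
    calc i ((h (x+y)).choose) = u (x+y) := (h _).choose_spec
    _ = u x + u y := map_add u.hom x y
    _ = i ((h x).choose) + i ((h y).choose) := by rw [(h x).choose_spec, (h y).choose_spec]
    _ = i ((h x).choose + (h y).choose) := (map_add i.hom _ _).symm
  · intro c x
    apply hi
    dsimp only []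
    calc i ((h (c • x)).choose) = u (c • x) := (h _).choose_spec
    _ = c • u x := map_smul u.hom c x
    _ = c • i ((h x).choose) := by rw [(h x).choose_spec]
    _ = i (c • (h x).choose) := (map_smul i.hom c _).symm
  · refine ModuleCat.hom_ext (LinearMap.ext fun x => ?_)
    show i ((h x).choose) = u x
    exact (h x).choose_spec

/-- Descend a map along a surjection whose kernel it kills. -/
theorem descendSurj {Y Z W : ModuleCat.{u} R} (ρ : Y ⟶ Z) (hρ : Function.Surjective ρ)
    (φ : Y ⟶ W) (h : ∀ x, ρ x = 0 → φ x = 0) : ∃ ψ : Z ⟶ W, ρ ≫ ψ = φ := by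
  have key : ∀ y y' : Y, ρ y = ρ y' → φ y = φ y' := by
    intro y y' hyy
    have h2 : φ (y - y') = 0 := h _ (by rw [map_sub, hyy, sub_self])
    rw [map_sub] at h2
    exact sub_eq_zero.mp h2
  refine ⟨ModuleCat.ofHom
          { toFun := fun z => φ (hρ z).choose
            map_add' := ?_
            map_smul' := ?_ }, ?_⟩
  · intro x y
    dsimp only []
    rw [← map_add]
    exact key _ _ (by rw [map_add, (hρ x).choose_spec, (hρ y).choose_spec, (hρ (x+y)).choose_spec])
  · intro c x
    dsimp only []
    rw [RingHom.id_apply, ← map_smul]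
    exact key _ _ (by rw [map_smul, (hρ x).choose_spec, (hρ (c • x)).choose_spec])
  · refine ModuleCat.hom_ext (LinearMap.ext fun x => ?_)
    show φ (hρ (ρ x)).choose = φ x
    exact key _ _ (hρ (ρ x)).choose_spec

/-- Triviality: chase into a subsingleton target. -/
theorem chase_subsingleton {X : ModuleCat.{u} R} (P : ProjectiveResolution X)
    {Y : ModuleCat.{u} R} (hY : Subsingleton Y) (n : ℕ) : Chase P Y n := by
  intro f _
  exact ⟨0, ModuleCat.hom_ext (LinearMap.ext fun x => Subsingleton.elim _ _)⟩
/-- Chase transfers along a bijective hom (contravariantly). -/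
theorem chase_of_bijective {X : ModuleCat.{u} R} (P : ProjectiveResolution X)
    {Y Y' : ModuleCat.{u} R} (e : Y ⟶ Y') (he : Function.Bijective e) (n : ℕ)
    (hY' : Chase P Y' n) : Chase P Y n := by
  haveI : Mono e := (ModuleCat.mono_iff_injective e).mpr he.1
  intro f hf
  obtain ⟨u, hu⟩ := hY' (f ≫ e) (by rw [← Category.assoc, hf, Limits.zero_comp])
  obtain ⟨w, hw⟩ := factorThruInj e he.1 u (fun x => he.2 (u x))
  refine ⟨w, ?_⟩
  rw [← cancel_mono e, Category.assoc, hw, hu]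
/-- Injective modules have vanishing higher Ext: the chase condition holds. -/
theorem chase_of_injective {X : ModuleCat.{u} R} (P : ProjectiveResolution X)
    {B : ModuleCat.{u} R} (hB : Module.Injective R B) (n : ℕ) : Chase P B n := by
  intro f hf
  set d := P.complex.d (n+1) n with hd
  set Rng : ModuleCat.{u} R := ModuleCat.of R ↥(LinearMap.range d.hom) with hRng
  set ρ : P.complex.X (n+1) ⟶ Rng := ModuleCat.ofHom d.hom.rangeRestrict with hρ
  have hexact := (ShortComplex.moduleCat_exact_iff _).mp (P.exact_succ n)
  obtain ⟨ψ, hψ⟩ := descendSurj ρ d.hom.surjective_rangeRestrict f (by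
    intro x hx
    have hx0 : d x = 0 := by
      have := congrArg (Submodule.subtype (LinearMap.range d.hom)) hx
      exact this
    obtain ⟨y, hy⟩ := hexact x hx0
    have : f x = (P.complex.d (n+2) (n+1) ≫ f) y := by rw [← hy]; rfl
    rw [this, hf]; rfl)
  obtain ⟨g, hg⟩ := hB.out (LinearMap.range d.hom).subtype (Submodule.injective_subtype _) ψ.hom
  refine ⟨ModuleCat.ofHom g, ?_⟩
  refine ModuleCat.hom_ext (LinearMap.ext fun x => ?_)
  have h1 : d x = (LinearMap.range d.hom).subtype (ρ x) := rfl
  show g (d x) = f x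
  rw [h1, hg (ρ x)]
  exact LinearMap.congr_fun (congrArg ModuleCat.Hom.hom hψ) x

section SES
variable {A B C : ModuleCat.{u} R} (i : A ⟶ B) (p : B ⟶ C)
  (hi : Function.Injective i) (hp : Function.Surjective p)
  (hex : ∀ b, p b = 0 ↔ ∃ a, i a = b)

include hi hp hex

omit hi hp in
theorem ip_zero : i ≫ p = 0 :=
  ModuleCat.hom_ext (LinearMap.ext fun a => (hex _).mpr ⟨a, rfl⟩)

/-- `Ext^{n+2}(X,A) = 0` from `Ext^{n+2}(X,B) = 0` and `Ext^{n+1}(X,C) = 0`. -/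
theorem chase_fst {X : ModuleCat.{u} R} (P : ProjectiveResolution X) (n : ℕ)
    (hB : Chase P B (n+1)) (hC : Chase P C n) : Chase P A (n+1) := by
  haveI : Epi p := (ModuleCat.epi_iff_surjective p).mpr hp
  haveI : Mono i := (ModuleCat.mono_iff_injective i).mpr hi
  have hip := ip_zero i p hex
  intro h hh
  obtain ⟨u, hu⟩ := hB (h ≫ i) (by rw [← Category.assoc, hh, Limits.zero_comp])
  have hup : P.complex.d (n+2) (n+1) ≫ (u ≫ p) = 0 := by
    rw [← Category.assoc, hu, Category.assoc, hip, Limits.comp_zero]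
  obtain ⟨v, hv⟩ := hC (u ≫ p) hup
  obtain ⟨vt, hvt⟩ : ∃ vt : P.complex.X n ⟶ B, vt ≫ p = v :=
    ⟨Projective.factorThru v p, Projective.factorThru_comp v p⟩
  set u' : P.complex.X (n+1) ⟶ B := u - P.complex.d (n+1) n ≫ vt with hu'
  have hu'p : u' ≫ p = 0 := by
    rw [hu', Preadditive.sub_comp, Category.assoc, hvt, hv, sub_self]
  obtain ⟨w, hw⟩ := factorThruInj i hi u' (by
    intro x
    refine (hex _).mp ?_
    show (u' ≫ p) x = 0
    rw [hu'p]; rfl)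
  refine ⟨w, ?_⟩
  rw [← cancel_mono i, Category.assoc, hw, hu', Preadditive.comp_sub, hu, ← Category.assoc,
    P.complex.d_comp_d, Limits.zero_comp, sub_zero]

/-- `Ext^{n+1}(X,C) = 0` from `Ext^{n+1}(X,B) = 0` and `Ext^{n+2}(X,A) = 0`. -/
theorem chase_snd {X : ModuleCat.{u} R} (P : ProjectiveResolution X) (n : ℕ)
    (hB : Chase P B n) (hA : Chase P A (n+1)) : Chase P C n := by
  haveI : Epi p := (ModuleCat.epi_iff_surjective p).mpr hp
  haveI : Mono i := (ModuleCat.mono_iff_injective i).mpr hi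
  have hip := ip_zero i p hex
  intro f hf
  obtain ⟨ft, hft⟩ : ∃ ft : P.complex.X (n+1) ⟶ B, ft ≫ p = f :=
    ⟨Projective.factorThru f p, Projective.factorThru_comp f p⟩
  obtain ⟨h, hh⟩ := factorThruInj i hi (P.complex.d (n+2) (n+1) ≫ ft) (by
    intro x
    refine (hex _).mp ?_
    show ((P.complex.d (n+2) (n+1) ≫ ft) ≫ p) x = 0
    rw [Category.assoc, hft, hf]; rfl)
  have hh0 : P.complex.d (n+3) (n+2) ≫ h = 0 := by
    rw [← cancel_mono i, Category.assoc, hh, ← Category.assoc, P.complex.d_comp_d,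
      Limits.zero_comp, Limits.zero_comp]
  obtain ⟨h', hh'⟩ := hA h hh0
  have hconc : P.complex.d (n+2) (n+1) ≫ (ft - h' ≫ i) = 0 := by
    rw [Preadditive.comp_sub, ← Category.assoc, hh', hh, sub_self]
  obtain ⟨g, hg⟩ := hB (ft - h' ≫ i) hconc
  refine ⟨g ≫ p, ?_⟩
  rw [← Category.assoc, hg, Preadditive.sub_comp, Category.assoc, hip, Limits.comp_zero,
    sub_zero, hft]







/-- Lifting of maps from `X` along `p`, given `Ext^1(X, A) = 0`. -/
theorem lift_cyclic {X : ModuleCat.{u} R} (P : ProjectiveResolution X)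
    (hA : Chase P A 0) (γ : X ⟶ C) : ∃ G : X ⟶ B, G ≫ p = γ := by
  haveI : Epi p := (ModuleCat.epi_iff_surjective p).mpr hp
  haveI : Mono i := (ModuleCat.mono_iff_injective i).mpr hi
  have hip := ip_zero i p hex
  set π₀ : P.complex.X 0 ⟶ X := P.π.f 0 with hπ₀
  have hπ₀surj : Function.Surjective π₀ :=
    (ModuleCat.epi_iff_surjective (P.π.f 0 : P.complex.X 0 ⟶ X)).mp inferInstance
  have hπ₀ker := (ShortComplex.moduleCat_exact_iff _).mp P.exact₀
  have hdπ₀ : P.complex.d 1 0 ≫ π₀ = 0 := P.complex_d_comp_π_f_zero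
  obtain ⟨u, hu⟩ : ∃ u : P.complex.X 0 ⟶ B, u ≫ p = π₀ ≫ γ :=
    ⟨Projective.factorThru (π₀ ≫ γ) p, Projective.factorThru_comp _ p⟩
  obtain ⟨w, hw⟩ := factorThruInj i hi (P.complex.d 1 0 ≫ u) (by
    intro x
    refine (hex _).mp ?_
    show ((P.complex.d 1 0 ≫ u) ≫ p) x = 0
    rw [Category.assoc, hu, ← Category.assoc, hdπ₀, Limits.zero_comp]; rfl)
  have hw0 : P.complex.d 2 1 ≫ w = 0 := by
    rw [← cancel_mono i, Category.assoc, hw, ← Category.assoc, P.complex.d_comp_d,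
      Limits.zero_comp, Limits.zero_comp]
  obtain ⟨v, hv⟩ := hA w hw0
  obtain ⟨G, hG⟩ := descendSurj π₀ hπ₀surj (u - v ≫ i) (by
    intro x hx
    obtain ⟨y, hy⟩ := hπ₀ker x hx
    have : (u - v ≫ i) x = (P.complex.d 1 0 ≫ (u - v ≫ i)) y := by rw [← hy]; rfl
    rw [this, Preadditive.comp_sub, ← Category.assoc, hv, hw, sub_self]; rfl)
  refine ⟨G, ?_⟩
  haveI : Epi π₀ := (ModuleCat.epi_iff_surjective π₀).mpr hπ₀surj
  rw [← cancel_epi π₀, ← Category.assoc, hG, Preadditive.sub_comp, Category.assoc, hip,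
    Limits.comp_zero, sub_zero, hu]

/-- `Ext^1(X, A) = 0` given lifting of maps `X ⟶ C` and `Ext^1(X, B) = 0`. -/
theorem chase_zero_of_lifts {X : ModuleCat.{u} R} (P : ProjectiveResolution X)
    (hB : Chase P B 0) (hlift : ∀ γ : X ⟶ C, ∃ G : X ⟶ B, G ≫ p = γ) : Chase P A 0 := by
  haveI : Epi p := (ModuleCat.epi_iff_surjective p).mpr hp
  haveI : Mono i := (ModuleCat.mono_iff_injective i).mpr hi
  have hip := ip_zero i p hex
  set π₀ : P.complex.X 0 ⟶ X := P.π.f 0 with hπ₀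
  have hπ₀surj : Function.Surjective π₀ :=
    (ModuleCat.epi_iff_surjective (P.π.f 0 : P.complex.X 0 ⟶ X)).mp inferInstance
  have hπ₀ker := (ShortComplex.moduleCat_exact_iff _).mp P.exact₀
  have hdπ₀ : P.complex.d 1 0 ≫ π₀ = 0 := P.complex_d_comp_π_f_zero
  intro f hf
  obtain ⟨u, hu⟩ := hB (f ≫ i) (by rw [← Category.assoc, hf, Limits.zero_comp])
  obtain ⟨γ, hγ⟩ := descendSurj π₀ hπ₀surj (u ≫ p) (by
    intro x hx
    obtain ⟨y, hy⟩ := hπ₀ker x hx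
    have : (u ≫ p) x = (P.complex.d 1 0 ≫ u ≫ p) y := by rw [← hy]; rfl
    rw [this, ← Category.assoc, hu, Category.assoc, hip, Limits.comp_zero]; rfl)
  obtain ⟨g, hg⟩ := hlift γ
  obtain ⟨v, hv⟩ := factorThruInj i hi (u - π₀ ≫ g) (by
    intro x
    refine (hex _).mp ?_
    show ((u - π₀ ≫ g) ≫ p) x = 0
    rw [Preadditive.sub_comp, Category.assoc, hg, hγ, sub_self]; rfl)
  refine ⟨v, ?_⟩
  rw [← cancel_mono i, Category.assoc, hv, Preadditive.comp_sub, hu, ← Category.assoc, hdπ₀,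
    Limits.zero_comp, sub_zero]

end SES

/-- Key Zorn argument: maps from a φ-torsion module into `C` lift along `p : B → C`
provided `B` is Baer (injective) and cyclic φ-torsion modules lift. -/
theorem key_lift {B C : ModuleCat.{u} R} (p : B ⟶ C) (hp : Function.Surjective p)
    (hBaer : Module.Baer R B)
    (hcyc : ∀ J : Ideal R, J.IsNonnil → ∀ γ : ModuleCat.of R (R ⧸ J) ⟶ C, ∃ G, G ≫ p = γ)
    {T : Type u} [AddCommGroup T] [Module R T] (hT : IsPhiTorsion R T)
    (f : T →ₗ[R] C) : ∃ g : T →ₗ[R] B, ∀ x, p (g x) = f x := by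
  classical
  set Ω : Set (T →ₗ.[R] B) := {q | ∀ x : q.domain, p (q x) = f x.val} with hΩ
  have hq0 : (⟨⊥, 0⟩ : T →ₗ.[R] B) ∈ Ω := by
    rintro ⟨x, hx⟩
    rw [Submodule.mem_bot] at hx
    subst hx
    show p 0 = f 0
    rw [map_zero, map_zero]
  obtain ⟨m, -, hmax⟩ := zorn_le_nonempty₀ Ω (by
    intro c hcΩ hchain y hyc
    have hdir : DirectedOn (· ≤ ·) c := hchain.directedOn
    refine ⟨LinearPMap.sSup c hdir, ?_, fun z hz => LinearPMap.le_sSup hdir hz⟩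
    intro x
    have hx : x.val ∈ sSup (LinearPMap.domain '' c) := x.2
    obtain ⟨d, ⟨l, hlc, rfl⟩, hxd⟩ := Submodule.mem_sSup_of_directed
      (Set.Nonempty.image _ ⟨y, hyc⟩) (by
        rintro d1 ⟨l1, h1, rfl⟩ d2 ⟨l2, h2, rfl⟩
        obtain ⟨z, hz, hle1, hle2⟩ := hdir l1 h1 l2 h2
        exact ⟨z.domain, ⟨z, hz, rfl⟩, hle1.1, hle2.1⟩) |>.mp hx
    have := LinearPMap.sSup_apply hdir hlc ⟨x.val, hxd⟩
    have hxeq : x = ⟨x.val, (LinearPMap.le_sSup hdir hlc).1 hxd⟩ := Subtype.ext rfl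
    rw [hxeq, this]
    exact hcΩ hlc ⟨x.val, hxd⟩) _ hq0
  have hmΩ : m ∈ Ω := hmax.1
  have htop : m.domain = ⊤ := by
    by_contra hne
    obtain ⟨t, ht⟩ : ∃ t : T, t ∉ m.domain := by
      by_contra hall
      push_neg at hall
      exact hne (Submodule.eq_top_iff'.mpr hall)
    set J : Ideal R := Submodule.comap (LinearMap.toSpanSingleton R T t) m.domain with hJdef
    have htmem : ∀ a : R, a ∈ J ↔ a • t ∈ m.domain := fun a => Iff.rfl
    have hJ : J.IsNonnil := by
      obtain ⟨I, hI, hann⟩ := hT t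
      intro hle
      exact hI (fun x hx => hle (by
        show x • t ∈ m.domain
        rw [hann x hx]
        exact Submodule.zero_mem _))
    obtain ⟨e0, he0⟩ := hp (f t)
    set h : ↥J →ₗ[R] B :=
      { toFun := fun a => m ⟨a.val • t, a.2⟩ - a.val • e0
        map_add' := by
          intro a b
          have h1 : (⟨(a + b).val • t, (a+b).2⟩ : m.domain)
              = ⟨a.val • t, a.2⟩ + ⟨b.val • t, b.2⟩ := Subtype.ext (by
            show (a.val + b.val) • t = a.val • t + b.val • t
            rw [add_smul])
          rw [h1, LinearPMap.map_add m _ _]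
          simp only [Submodule.coe_add, add_smul]
          abel
        map_smul' := by
          intro c a
          have h1 : (⟨(c • a).val • t, (c • a).2⟩ : m.domain)
              = c • ⟨a.val • t, a.2⟩ := Subtype.ext (by
            show (c * a.val) • t = c • (a.val • t)
            rw [mul_smul])
          rw [h1, LinearPMap.map_smul m _ _]
          simp only [SetLike.val_smul, smul_eq_mul, RingHom.id_apply, smul_sub, mul_smul]
        } with hhdef
    have hph : ∀ a : J, p (h a) = 0 := by
      intro a
      show p (m ⟨a.val • t, a.2⟩ - a.val • e0) = 0
      rw [map_sub, hmΩ ⟨a.val • t, a.2⟩]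
      show f (a.val • t) - p (a.val • e0) = 0
      rw [map_smul, map_smul, he0, sub_self]
    obtain ⟨H, hH⟩ := hBaer J h
    have hker : J ≤ LinearMap.ker (p.hom.comp H) := by
      intro x hx
      show p (H x) = 0
      rw [hH x hx]
      exact hph _
    set γ : R ⧸ J →ₗ[R] C := Submodule.liftQ J (p.hom.comp H) hker with hγdef
    obtain ⟨G, hG⟩ := hcyc J hJ (ModuleCat.ofHom γ)
    set φ : R →ₗ[R] B := H - G.hom.comp J.mkQ with hφdef
    set b0 : B := φ 1 with hb0def
    have hpb0 : p b0 = 0 := by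
      show p (H 1 - G (J.mkQ 1)) = 0
      rw [map_sub]
      have : p (G (J.mkQ 1)) = γ (J.mkQ 1) := LinearMap.congr_fun (congrArg ModuleCat.Hom.hom hG) (J.mkQ 1)
      rw [this, hγdef, Submodule.mkQ_apply, Submodule.liftQ_apply]
      show p (H 1) - p (H 1) = 0
      rw [sub_self]
    have hb0 : ∀ a (ha : a ∈ J), a • b0 = h ⟨a, ha⟩ := by
      intro a ha
      have h1 : a • b0 = φ a := by
        rw [← map_smul, smul_eq_mul, mul_one]
      rw [h1]
      show H a - G (J.mkQ a) = h ⟨a, ha⟩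
      have h2 : J.mkQ a = 0 := (Submodule.Quotient.mk_eq_zero J).mpr ha
      rw [h2, map_zero, sub_zero, hH a ha]
    set e : B := e0 + b0 with hedef
    have hpe : p e = f t := by rw [hedef, map_add, hpb0, add_zero, he0]
    have hae : ∀ a (ha : a ∈ J), a • e = m ⟨a • t, ha⟩ := by
      intro a ha
      rw [hedef, smul_add, hb0 a ha]
      show a • e0 + (m ⟨a • t, ha⟩ - a • e0) = m ⟨a • t, ha⟩
      abel
    set q2 : T →ₗ.[R] B := LinearPMap.mkSpanSingleton' t e (by
      intro c hc
      have hcJ : c ∈ J := by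
        show c • t ∈ m.domain
        rw [hc]; exact Submodule.zero_mem _
      rw [RingHom.id_apply, hae c hcJ]
      have : (⟨c • t, hcJ⟩ : m.domain) = 0 := Subtype.ext hc
      rw [this, LinearPMap.map_zero m]) with hq2def
    have hq2dom : q2.domain = Submodule.span R {t} := by
      rw [hq2def]; exact LinearPMap.domain_mkSpanSingleton t e _
    have hcompat : ∀ (x : m.domain) (y : q2.domain), (x : T) = y → m x = q2 y := by
      intro x y hxy
      have hy : (y : T) ∈ Submodule.span R {t} := hq2dom ▸ y.2
      obtain ⟨c, hc⟩ := Submodule.mem_span_singleton.mp hy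
      have hcJ : c ∈ J := by
        show c • t ∈ m.domain
        rw [hc, ← hxy]; exact x.2
      have hq2y : q2 y = c • e := by
        have hyeq : y = ⟨c • t, by
          rw [hq2dom]
          exact Submodule.smul_mem _ c (Submodule.mem_span_singleton_self t)⟩ := by
          exact Subtype.ext hc.symm
        rw [hyeq]
        exact LinearPMap.mkSpanSingleton'_apply t e _ c _
      have hxeq : x = ⟨c • t, hcJ⟩ := Subtype.ext (by rw [hxy, ← hc])
      rw [hq2y, hxeq, ← hae c hcJ]
    set q' := m.sup q2 hcompat with hq'def
    have hq'Ω : q' ∈ Ω := by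
      intro x
      have hx : x.val ∈ m.domain ⊔ q2.domain := x.2
      obtain ⟨s, hs, z, hz, hsz⟩ := Submodule.mem_sup.mp hx
      have happ := LinearPMap.sup_apply hcompat ⟨s, hs⟩ ⟨z, hz⟩ x hsz
      rw [happ, map_add, hmΩ ⟨s, hs⟩]
      obtain ⟨c, hc⟩ := Submodule.mem_span_singleton.mp (hq2dom ▸ hz)
      have hq2z : q2 ⟨z, hz⟩ = c • e := by
        have : (⟨z, hz⟩ : q2.domain) = ⟨c • t, by
          rw [hq2dom]
          exact Submodule.smul_mem _ c (Submodule.mem_span_singleton_self t)⟩ :=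
          Subtype.ext hc.symm
        rw [this]
        exact LinearPMap.mkSpanSingleton'_apply t e _ c _
      have h5 : p (q2 ⟨z, hz⟩) = c • p e := by rw [hq2z]; exact map_smul p.hom c e
      have h6 : f z = c • f t := by rw [← hc]; exact map_smul f c t
      rw [h5, hpe, ← hsz, map_add, h6]
    have hle : q' ≤ m := hmax.2 hq'Ω (LinearPMap.left_le_sup m q2 hcompat)
    apply ht
    apply hle.1
    show t ∈ m.domain ⊔ q2.domain
    refine Submodule.mem_sup_right ?_
    rw [hq2dom]
    exact Submodule.mem_span_singleton_self t
  refine ⟨{ toFun := fun x => m ⟨x, htop ▸ Submodule.mem_top⟩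
            map_add' := ?_
            map_smul' := ?_ }, ?_⟩
  · intro x y
    rw [show (⟨x + y, htop ▸ Submodule.mem_top⟩ : m.domain)
      = ⟨x, htop ▸ Submodule.mem_top⟩ + ⟨y, htop ▸ Submodule.mem_top⟩ from Subtype.ext rfl,
      LinearPMap.map_add m _ _]
  · intro c x
    rw [show (⟨c • x, htop ▸ Submodule.mem_top⟩ : m.domain)
      = c • ⟨x, htop ▸ Submodule.mem_top⟩ from Subtype.ext rfl,
      LinearPMap.map_smul m _ _, RingHom.id_apply]
  · intro x
    exact hmΩ ⟨x, htop ▸ Submodule.mem_top⟩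

theorem isPhiTorsion_quotient (I : Ideal R) (hI : I.IsNonnil) : IsPhiTorsion R (R ⧸ I) := by
  intro t
  refine ⟨I, hI, fun a ha => ?_⟩
  obtain ⟨r, rfl⟩ := Submodule.Quotient.mk_surjective I t
  show a • Submodule.Quotient.mk r = 0
  rw [← Submodule.Quotient.mk_smul, Submodule.Quotient.mk_eq_zero]
  exact Ideal.mul_mem_right r I ha

section Master
variable (M : ModuleCat.{u} R)

/-- The cosyzygy chain of `M`. -/
def cosyz : ℕ → ModuleCat.{u} R :=
  fun j => Nat.rec M (fun _ Cj => ModuleCat.of R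
    (↥(Injective.under Cj) ⧸ LinearMap.range (Injective.ι Cj).hom)) j

/-- The master lemma: if `Ext^k(R/I, M) = 0` for all nonnil `I`, all `k ≥ 1`, then
`Ext^q(T, M) = 0` for every φ-torsion `T` and `q ≥ 1`. -/
theorem ext_vanish_phiTorsion
    (hyp : ∀ I : Ideal R, I.IsNonnil → ∀ k : ℕ,
      Subsingleton (((Ext R (ModuleCat.{u} R) (k+1)).obj
        (Opposite.op (ModuleCat.of R (R ⧸ I)))).obj M))
    (T : Type u) [AddCommGroup T] [Module R T] (hT : IsPhiTorsion R T) (q : ℕ) :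
    Subsingleton (((Ext R (ModuleCat.{u} R) (q+1)).obj
      (Opposite.op (ModuleCat.of R T))).obj M) := by
  set C : ℕ → ModuleCat.{u} R := cosyz M with hC
  set B : ℕ → ModuleCat.{u} R := fun j => Injective.under (C j) with hB
  set ii : ∀ j, C j ⟶ B j := fun j => Injective.ι (C j) with hii
  set pp : ∀ j, B j ⟶ C (j+1) :=
    fun j => ModuleCat.ofHom (LinearMap.range (Injective.ι (C j)).hom).mkQ
    with hpp
  have hi : ∀ j, Function.Injective (ii j) := fun j =>
    (ModuleCat.mono_iff_injective (ii j)).mp inferInstance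
  have hp : ∀ j, Function.Surjective (pp j) := fun j => Submodule.mkQ_surjective _
  have hex : ∀ j, ∀ b, (pp j) b = 0 ↔ ∃ a, (ii j) a = b := by
    intro j b
    show Submodule.Quotient.mk b = 0 ↔ _
    rw [Submodule.Quotient.mk_eq_zero]
    exact ⟨fun ⟨a, ha⟩ => ⟨a, ha⟩, fun ⟨a, ha⟩ => ⟨a, ha⟩⟩
  have hBinj : ∀ j, Module.Injective R ↥(B j) := fun j =>
    @Module.injective_module_of_injective_object R ↥(B j) _ _ _
      (by exact Injective.injective_under (C j))
  -- Step A: Ext^{q+1}(R/I, C j) = 0 for every nonnil I and all q, j.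
  have stepA : ∀ (I : Ideal R) (_ : I.IsNonnil)
      (P : ProjectiveResolution (ModuleCat.of R (R ⧸ I))) (j q : ℕ), Chase P (C j) q := by
    intro I hI P j
    induction j with
    | zero => intro q; exact (chase_iff P M q).mp (hyp I hI q)
    | succ j ih =>
      intro q
      exact chase_snd (ii j) (pp j) (hi j) (hp j) (hex j) P q
        (chase_of_injective P (hBinj j) q) (ih (q+1))
  -- Step B/C: all maps from φ-torsion modules into C (j+1) lift along pp j.
  have stepC : ∀ (j : ℕ) (T' : Type u) (_ : AddCommGroup T') (_ : Module R T')
      (_ : IsPhiTorsion R T') (f : T' →ₗ[R] C (j+1)), ∃ g : T' →ₗ[R] B j,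
        ∀ x, (pp j) (g x) = f x := by
    intro j T' _ _ hT' f
    refine key_lift (pp j) (hp j) (Module.Baer.of_injective (hBinj j)) ?_ hT' f
    intro J hJ γ
    exact lift_cyclic (ii j) (pp j) (hi j) (hp j) (hex j)
      (ProjectiveResolution.of (ModuleCat.of R (R ⧸ J)))
      (stepA J hJ _ j 0) γ
  -- Step D/E: Chase P_T (C j) q for all j q.
  have stepE : ∀ (P : ProjectiveResolution (ModuleCat.of R T)) (q j : ℕ), Chase P (C j) q := by
    intro P q
    induction q with
    | zero =>
      intro j
      refine chase_zero_of_lifts (ii j) (pp j) (hi j) (hp j) (hex j) P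
        (chase_of_injective P (hBinj j) 0) ?_
      intro γ
      obtain ⟨g, hg⟩ := stepC j T inferInstance inferInstance hT γ.hom
      exact ⟨ModuleCat.ofHom g, ModuleCat.hom_ext (LinearMap.ext hg)⟩
    | succ q ih =>
      intro j
      exact chase_fst (ii j) (pp j) (hi j) (hp j) (hex j) P q
        (chase_of_injective P (hBinj j) (q+1)) (ih (j+1))
  exact (chase_iff (ProjectiveResolution.of (ModuleCat.of R T)) M q).mpr
    (stepE (ProjectiveResolution.of (ModuleCat.of R T)) q 0)

end Master

theorem sni_of_hyp (M : Type u) [AddCommGroup M] [Module R M]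
    (hyp : ∀ I : Ideal R, I.IsNonnil → ∀ k : ℕ,
      Subsingleton (((Ext R (ModuleCat.{u} R) (k+1)).obj
        (Opposite.op (ModuleCat.of R (R ⧸ I)))).obj (ModuleCat.of R M))) :
    IsStronglyNonnilInjective R M := by
  intro T _ _ hT m hm
  obtain ⟨q, rfl⟩ : ∃ q, m = q + 1 := ⟨m - 1, by omega⟩
  exact ext_vanish_phiTorsion (ModuleCat.of R M) hyp T hT q

theorem sni_of_injective (Bobj : ModuleCat.{u} R) (hB : Module.Injective R ↥Bobj) :
    IsStronglyNonnilInjective R ↥Bobj := by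
  intro T _ _ hT m hm
  obtain ⟨q, rfl⟩ : ∃ q, m = q + 1 := ⟨m - 1, by omega⟩
  exact (chase_iff (ProjectiveResolution.of (ModuleCat.of R T)) Bobj q).mpr
    (chase_of_injective _ hB q)

/-- Backward direction: construction of the coresolution, by induction on `n`. -/
theorem package : ∀ (n : ℕ) (M : Type u) (_ : AddCommGroup M) (_ : Module R M),
    (∀ I : Ideal R, I.IsNonnil → ∀ k : ℕ,
      Subsingleton (((Ext R (ModuleCat.{u} R) (n+k+1)).obj
        (Opposite.op (ModuleCat.of R (R ⧸ I)))).obj (ModuleCat.of R M))) →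
    ∃ (E : ℕ → ModuleCat.{u} R) (ε : M →ₗ[R] E 0) (d : ∀ i, E i →ₗ[R] E (i + 1)),
      Function.Injective ε ∧ Function.Exact ε (d 0) ∧
      (∀ i, Function.Exact (d i) (d (i + 1))) ∧
      (∀ i, n < i → Subsingleton (E i)) ∧
      (∀ i, i ≤ n → IsStronglyNonnilInjective R (E i)) := by
  intro n
  induction n with
  | zero =>
    intro M _ _ hyp
    refine ⟨fun i => Nat.rec (ModuleCat.of R M) (fun _ _ => ModuleCat.of R PUnit) i,
      LinearMap.id, fun i => 0, fun a b h => h, ?_, ?_, ?_, ?_⟩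
    · intro y
      constructor
      · intro _; exact ⟨y, rfl⟩
      · intro _; rfl
    · intro i y
      constructor
      · intro _
        refine ⟨0, ?_⟩
        have : Subsingleton (PUnit.{u+1}) := inferInstance
        exact Subsingleton.elim _ _
      · intro _; rfl
    · intro i hi
      match i, hi with
      | (j+1), _ => exact (inferInstance : Subsingleton PUnit)
    · intro i hi
      match i, hi with
      | 0, _ =>
        refine sni_of_hyp M (fun I hI k => ?_)
        have := hyp I hI k
        rwa [show 0+k+1 = k+1 from by omega] at this
  | succ n ih =>
    intro M _ _ hyp
    set M₀ : ModuleCat.{u} R := ModuleCat.of R M with hM₀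
    set B0 : ModuleCat.{u} R := Injective.under M₀ with hB0
    set ι0 : M₀ ⟶ B0 := Injective.ι M₀ with hι0
    set Q : Submodule R ↥B0 := LinearMap.range ι0.hom with hQ
    set C1 : ModuleCat.{u} R := ModuleCat.of R (↥B0 ⧸ Q) with hC1
    have hi0 : Function.Injective ι0 := (ModuleCat.mono_iff_injective ι0).mp inferInstance
    have hp0 : Function.Surjective Q.mkQ := Submodule.mkQ_surjective _
    have hex0 : ∀ b, Q.mkQ b = 0 ↔ ∃ a, ι0 a = b := by
      intro b
      show Submodule.Quotient.mk b = 0 ↔ _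
      rw [Submodule.Quotient.mk_eq_zero]
      exact ⟨fun ⟨a, ha⟩ => ⟨a, ha⟩, fun ⟨a, ha⟩ => ⟨a, ha⟩⟩
    have hBinj : Module.Injective R ↥B0 :=
      @Module.injective_module_of_injective_object R ↥B0 _ _ _
        (by exact Injective.injective_under M₀)
    have hypC1 : ∀ I : Ideal R, I.IsNonnil → ∀ k : ℕ,
        Subsingleton (((Ext R (ModuleCat.{u} R) (n+k+1)).obj
          (Opposite.op (ModuleCat.of R (R ⧸ I)))).obj (ModuleCat.of R ↥C1)) := by
      intro I hI k
      set P := ProjectiveResolution.of (ModuleCat.of R (R ⧸ I)) with hP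
      have h1 : Subsingleton (((Ext R (ModuleCat.{u} R) ((n+k+1)+1)).obj
          (Opposite.op (ModuleCat.of R (R ⧸ I)))).obj M₀) := by
        have := hyp I hI k
        rwa [show (n+1)+k+1 = (n+k+1)+1 from by omega] at this
      have h2 : Chase P M₀ (n+k+1) := (chase_iff P M₀ (n+k+1)).mp h1
      exact (chase_iff P C1 (n+k)).mpr
        (chase_snd ι0 (ModuleCat.ofHom Q.mkQ : B0 ⟶ C1) hi0 hp0 hex0 P (n+k)
          (chase_of_injective P hBinj (n+k)) h2)
    obtain ⟨E', ε', d', h1', h2', h3', h4', h5'⟩ := ih ↥C1 inferInstance inferInstance hypC1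
    refine ⟨fun i => Nat.rec B0 (fun j _ => E' j) i,
      ι0.hom,
      fun i => Nat.rec (motive := fun i =>
          (Nat.rec B0 (fun j _ => E' j) i : ModuleCat.{u} R) →ₗ[R]
          (Nat.rec B0 (fun j _ => E' j) (i+1) : ModuleCat.{u} R))
        (ε' ∘ₗ (Q.mkQ : ↥B0 →ₗ[R] ↥C1)) (fun j _ => d' j) i,
      hi0, ?_, ?_, ?_, ?_⟩
    · intro y
      show ε' (Q.mkQ y) = 0 ↔ _
      constructor
      · intro hy
        have : Q.mkQ y = 0 := h1' (by rw [hy, map_zero])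
        obtain ⟨a, ha⟩ := (hex0 y).mp this
        exact ⟨a, ha⟩
      · rintro ⟨a, rfl⟩
        show ε' (Q.mkQ (ι0 a)) = 0
        rw [(hex0 (ι0 a)).mpr ⟨a, rfl⟩, map_zero]
    · intro i
      match i with
      | 0 =>
        intro z
        show d' 0 z = 0 ↔ _
        rw [h2' z]
        constructor
        · rintro ⟨c, rfl⟩
          obtain ⟨b, rfl⟩ := hp0 c
          exact ⟨b, rfl⟩
        · rintro ⟨b, rfl⟩
          exact ⟨Q.mkQ b, rfl⟩
      | (j+1) => exact h3' j
    · intro i hi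
      match i, hi with
      | (j+1), hi => exact h4' j (by omega)
    · intro i hi
      match i with
      | 0 => exact sni_of_injective B0 hBinj
      | (j+1) => exact h5' j (by omega)

/-- Forward direction: a strongly nonnil-injective coresolution of length `n` forces
vanishing of `Ext^{n+k+1}(R/I, M)`. -/
theorem forward_dir (M : Type u) [AddCommGroup M] [Module R M] (n : ℕ)
    (E : ℕ → ModuleCat.{u} R) (ε : M →ₗ[R] E 0) (d : ∀ i, E i →ₗ[R] E (i+1))
    (hinj : Function.Injective ε) (hex0 : Function.Exact ε (d 0))
    (hexs : ∀ i, Function.Exact (d i) (d (i+1)))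
    (hz : ∀ i, n < i → Subsingleton (E i))
    (hsni : ∀ i, i ≤ n → IsStronglyNonnilInjective R (E i))
    (I : Ideal R) (hI : I.IsNonnil) (k : ℕ) :
    Subsingleton (((Ext R (ModuleCat.{u} R) (n+k+1)).obj
      (Opposite.op (ModuleCat.of R (R ⧸ I)))).obj (ModuleCat.of R M)) := by
  set P := ProjectiveResolution.of (ModuleCat.of R (R ⧸ I)) with hP
  have htor := isPhiTorsion_quotient I hI
  have hchE : ∀ j, j ≤ n → ∀ q, Chase P (E j) q := by
    intro j hj q
    exact (chase_iff P (E j) q).mp (hsni j hj (R ⧸ I) htor (q+1) (by omega))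
  set A : ℕ → ModuleCat.{u} R := fun j => ModuleCat.of R ↥(LinearMap.ker (d j)) with hA
  set ιA : ∀ j, A j ⟶ E j := fun j => ModuleCat.ofHom (LinearMap.ker (d j)).subtype with hιA
  set πA : ∀ j, E j ⟶ A (j+1) := fun j => ModuleCat.ofHom <| LinearMap.codRestrict (LinearMap.ker (d (j+1))) (d j)
    (fun x => LinearMap.mem_ker.mpr ((hexs j (d j x)).mpr ⟨x, rfl⟩)) with hπA
  have hiA : ∀ j, Function.Injective (ιA j) := fun j => Submodule.injective_subtype _
  have hpA : ∀ j, Function.Surjective (πA j) := by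
    intro j y
    obtain ⟨x, hx⟩ := (hexs j y.val).mp (LinearMap.mem_ker.mp y.2)
    exact ⟨x, Subtype.ext hx⟩
  have hexA : ∀ j, ∀ b, (πA j) b = 0 ↔ ∃ a, (ιA j) a = b := by
    intro j b
    constructor
    · intro hb
      have : d j b = 0 := by
        have := congrArg Subtype.val hb
        exact this
      exact ⟨⟨b, LinearMap.mem_ker.mpr this⟩, rfl⟩
    · rintro ⟨a, rfl⟩
      exact Subtype.ext (LinearMap.mem_ker.mp a.2)
  have hexM : ∀ b, (πA 0) b = 0 ↔ ∃ a : (ModuleCat.of R M : Type u), ε a = b := by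
    intro b
    constructor
    · intro hb
      have hd0 : d 0 b = 0 := by
        have := congrArg Subtype.val hb
        exact this
      exact (hex0 b).mp hd0
    · rintro ⟨a, rfl⟩
      exact Subtype.ext ((hex0 (ε a)).mpr ⟨a, rfl⟩)
  -- base: A n ≅ E n
  have hdn0 : ∀ b : E n, d n b = 0 := by
    intro b
    have : Subsingleton (E (n+1)) := hz (n+1) (by omega)
    exact Subsingleton.elim _ _
  have hbase : ∀ q, Chase P (A n) q := by
    intro q
    refine chase_of_bijective P (ιA n) ⟨hiA n, ?_⟩ q (hchE n le_rfl q)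
    intro b
    exact ⟨⟨b, LinearMap.mem_ker.mpr (hdn0 b)⟩, rfl⟩
  have key : ∀ dd, dd ≤ n → Chase P (A (n - dd)) (k + dd) := by
    intro dd
    induction dd with
    | zero =>
      intro _
      rw [show n - 0 = n from rfl]
      exact hbase k
    | succ dd ihd =>
      intro hdd
      have hstep := chase_fst (ιA (n - dd - 1)) (πA (n - dd - 1)) (hiA _) (hpA _) (hexA _)
        P (k + dd) (hchE (n - dd - 1) (by omega) (k + dd + 1)) (by
          have := ihd (by omega)
          rwa [← show n - dd - 1 + 1 = n - dd from by omega] at this)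
      rwa [show n - (dd + 1) = n - dd - 1 from by omega, show k + (dd + 1) = k + dd + 1 from rfl]
  have main : Chase P (ModuleCat.of R M) (n + k) := by
    match n, hz, hsni, hchE, hbase, key, hdn0, hexA, hπA with
    | 0, hz, hsni, hchE, hbase, key, hdn0, hexA, hπA =>
      refine chase_of_bijective (Y := ModuleCat.of R M) (Y' := E 0) P (ModuleCat.ofHom ε) ⟨hinj, ?_⟩ (0 + k)
        (hchE 0 le_rfl (0 + k))
      intro b
      exact (hex0 b).mp (hdn0 b)
    | (n''+1), hz, hsni, hchE, hbase, key, hdn0, hexA, hπA =>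
      have hC : Chase P (A 1) (n'' + k) := by
        have := key n'' (by omega)
        rwa [show n'' + 1 - n'' = 1 from by omega, show k + n'' = n'' + k from by omega] at this
      have := chase_fst (A := ModuleCat.of R M) (B := E 0) (C := A 1) (ModuleCat.ofHom ε) (πA 0) hinj (hpA 0) hexM P (n'' + k)
        (hchE 0 (by omega) (n'' + k + 1)) hC
      rwa [show n'' + 1 + k = n'' + k + 1 from by omega]
  exact (chase_iff P (ModuleCat.of R M) (n + k)).mpr main

end
end Aux

/-- Over an NP-ring, `M` admits an exact sequence
`0 → M → E_0 → E_1 → ... → E_n → 0` with each `E_i` strongly nonnil-injective (i.e. the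
φ-injective dimension of `M` is at most `n`) iff `Ext^{n+k}(R/I, M) = 0` for every nonnil
ideal `I` and every `k ≥ 1`. (The sequence is encoded by an `ℕ`-indexed exact complex
whose entries vanish in degrees `> n`.) -/
theorem statement16 (R : Type u) [CommRing R] (hR : (nilradical R).IsPrime)
    (M : Type u) [AddCommGroup M] [Module R M] (n : ℕ) :
    (∃ (E : ℕ → ModuleCat.{u} R) (ε : M →ₗ[R] E 0) (d : ∀ i, E i →ₗ[R] E (i + 1)),
      Function.Injective ε ∧ Function.Exact ε (d 0) ∧
      (∀ i, Function.Exact (d i) (d (i + 1))) ∧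
      (∀ i, n < i → Subsingleton (E i)) ∧
      (∀ i, i ≤ n → IsStronglyNonnilInjective R (E i))) ↔
    (∀ I : Ideal R, I.IsNonnil → ∀ k : ℕ, 1 ≤ k →
      Subsingleton (((Ext R (ModuleCat.{u} R) (n + k)).obj
        (Opposite.op (ModuleCat.of R (R ⧸ I)))).obj (ModuleCat.of R M))) := by
  constructor
  · rintro ⟨E, ε, d, hinj, hex0, hexs, hz, hsni⟩ I hI k hk
    obtain ⟨k', rfl⟩ : ∃ k', k = k' + 1 := ⟨k - 1, by omega⟩
    exact forward_dir M n E ε d hinj hex0 hexs hz hsni I hI k'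
  · intro hyp
    exact package n M inferInstance inferInstance (fun I hI k => hyp I hI (k+1) (by omega))
end

section
/- Let R be a φ-ring. Then every R-module is strongly nonnil-injective if and only if R/Nil(R) is a field (equivalently, R is a φ-von Neumann regular ring, equivalently the φ-global dimension of R is 0). -/
open CategoryTheory

universe u

open CategoryTheory Limits in
lemma subsingleton_of_isZero' {S : Type u} [Ring S] {M : ModuleCat.{u} S} (h : IsZero M) :
    Subsingleton M := by
  refine ⟨fun a b => ?_⟩
  have h1 : (𝟙 M : M ⟶ M) = 0 := h.eq_of_src _ _
  have h3 : ∀ x : M, x = 0 := fun x => by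
    have := LinearMap.congr_fun (congrArg ModuleCat.Hom.hom h1) x
    simpa using this
  rw [h3 a, h3 b]

open CategoryTheory Limits ModuleCat in
lemma aux_projective (R : Type u) [CommRing R] (T : Type u) [AddCommGroup T] [Module R T]
    (h : ∀ (M : Type u) [AddCommGroup M] [Module R M],
      Subsingleton (((Ext R (ModuleCat.{u} R) 1).obj
        (Opposite.op (ModuleCat.of R T))).obj (ModuleCat.of R M))) :
    Module.Projective R T := by
  set X : ModuleCat.{u} R := ModuleCat.of R T with hX
  let P : ProjectiveResolution X := (HasProjectiveResolution.out (Z := X)).some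
  set P₀ := P.complex.X 0 with hP0
  set P₁ := P.complex.X 1 with hP1
  set d : P₁ ⟶ P₀ := P.complex.d 1 0 with hd
  set π₀ : P₀ ⟶ X := P.π.f 0 with hπ
  set K : Submodule R P₀ := LinearMap.ker π₀.hom with hK
  haveI := h (↥K)
  set Kmod : ModuleCat.{u} R := ModuleCat.of R ↥K with hKmod
  set C := P.complex.linearYonedaObj R Kmod with hC
  have hsub : Subsingleton (C.homology 1) := by
    have e := P.isoExt (R := R) 1 Kmod
    refine ⟨fun a b => ?_⟩
    have ha : e.hom (e.inv a) = a := Iso.inv_hom_id_apply e a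
    have hb : e.hom (e.inv b) = b := Iso.inv_hom_id_apply e b
    rw [← ha, ← hb, Subsingleton.elim (e.inv a) (e.inv b)]
  have hz : IsZero (C.homology 1) := @ModuleCat.isZero_of_subsingleton _ _ _ hsub
  have hex : C.ExactAt 1 := (HomologicalComplex.exactAt_iff_isZero_homology C 1).2 hz
  rw [HomologicalComplex.exactAt_iff' C 0 1 2 (by simp) (by simp)] at hex
  rw [ShortComplex.moduleCat_exact_iff] at hex
  have hdK : ∀ y : P₁, d.hom y ∈ K := by
    intro y
    have h0 : d ≫ π₀ = 0 := P.complex_d_comp_π_f_zero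
    have h1 := LinearMap.congr_fun (congrArg ModuleCat.Hom.hom h0) y
    simpa [hK] using h1
  set f : P₁ ⟶ Kmod := ModuleCat.ofHom (LinearMap.codRestrict K d.hom hdK : P₁ →ₗ[R] ↥K) with hf
  set ι : Kmod ⟶ P₀ := ModuleCat.ofHom (K.subtype : ↥K →ₗ[R] P₀) with hι
  have hfι : f ≫ ι = d := by
    apply ModuleCat.hom_ext; apply LinearMap.ext; intro y; rfl
  have hcocycle : (C.sc' 0 1 2).g (show ↑((C.sc' 0 1 2).X₂) from f) = 0 := by
    show P.complex.d 2 1 ≫ f = 0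
    apply ModuleCat.hom_ext; apply LinearMap.ext; intro z
    apply Subtype.ext
    show d.hom ((P.complex.d 2 1) z) = 0
    exact LinearMap.congr_fun (congrArg ModuleCat.Hom.hom (P.complex.d_comp_d 2 1 0)) z
  obtain ⟨s, hs⟩ := hex _ hcocycle
  have hs' : d ≫ (show P₀ ⟶ Kmod from s) = f := hs
  have hsk : ∀ k : ↥K, (show P₀ ⟶ Kmod from s) (k : ↑P₀) = k := by
    intro k
    obtain ⟨y, hy⟩ := (ShortComplex.moduleCat_exact_iff _).1 P.exact₀ (k : ↑P₀) k.2
    have h5 : (show P₀ ⟶ Kmod from s) (d.hom y)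
        = LinearMap.codRestrict K d.hom hdK y := LinearMap.congr_fun (congrArg ModuleCat.Hom.hom hs') y
    rw [← hy, h5]
    apply Subtype.ext
    rw [LinearMap.codRestrict_apply]
    exact hy
  set φ : P₀ ⟶ P₀ := 𝟙 P₀ - (show P₀ ⟶ Kmod from s) ≫ ι with hφ
  have hdφ : d ≫ φ = 0 := by
    rw [hφ, Preadditive.comp_sub, Category.comp_id, ← Category.assoc, hs', hfι, sub_self]
  obtain ⟨σ, hπσ0⟩ : { σ : X ⟶ P₀ // π₀ ≫ σ = φ } :=
    CokernelCofork.IsColimit.desc' P.isColimitCokernelCofork φ hdφ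
  have hπσ : π₀ ≫ σ = φ := by simpa using hπσ0
  have hιπ : ι ≫ π₀ = 0 := by
    apply ModuleCat.hom_ext; apply LinearMap.ext; intro k
    exact k.2
  have hσπ : σ ≫ π₀ = 𝟙 X := by
    haveI : Epi π₀ := by rw [hπ]; exact (inferInstance : Epi (P.π.f 0))
    rw [← cancel_epi π₀, ← Category.assoc, hπσ, hφ, Preadditive.sub_comp, Category.id_comp,
      Category.assoc, hιπ, comp_zero, sub_zero, Category.comp_id]
  haveI : Projective X := by
    constructor
    intro E X' g e he
    exact ⟨σ ≫ Projective.factorThru (π₀ ≫ g) e, by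
      rw [Category.assoc, Projective.factorThru_comp, ← Category.assoc, hσπ, Category.id_comp]⟩
  exact (_root_.IsProjective.iff_projective T).mpr this


/-- For a φ-ring `R`, every `R`-module is strongly nonnil-injective iff
`R/Nil(R)` is a field (i.e. `R` is φ-von Neumann regular). -/
theorem statement18 (R : Type u) [CommRing R] (hR : IsPhiRing R) :
    (∀ (M : Type u) [AddCommGroup M] [Module R M], IsStronglyNonnilInjective R M) ↔
    IsField (R ⧸ nilradical R) := by
  constructor
  · intro H
    haveI hp : (nilradical R).IsPrime := hR.1
    haveI : Nontrivial (R ⧸ nilradical R) := Ideal.Quotient.nontrivial_iff.mpr hp.ne_top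
    refine ⟨exists_pair_ne _, mul_comm, ?_⟩
    intro a ha
    obtain ⟨x, rfl⟩ := Ideal.Quotient.mk_surjective a
    have hx : x ∉ nilradical R := fun hx => ha (Ideal.Quotient.eq_zero_iff_mem.2 hx)
    have hT : IsPhiTorsion R (R ⧸ (Ideal.span {x} : Ideal R)) := by
      intro t
      refine ⟨Ideal.span {x}, ?_, ?_⟩
      · intro hle; exact hx (hle (Ideal.subset_span rfl))
      · intro b hb
        obtain ⟨r, rfl⟩ := Submodule.Quotient.mk_surjective _ t
        rw [← Submodule.Quotient.mk_smul, Submodule.Quotient.mk_eq_zero]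
        exact (Ideal.span {x}).mul_mem_right r hb
    have hproj : Module.Projective R (R ⧸ (Ideal.span {x} : Ideal R)) :=
      aux_projective R _ (fun M _ _ => (H M) _ hT 1 le_rfl)
    obtain ⟨g, hg⟩ := Module.projective_lifting_property
      (Ideal.span {x} : Submodule R R).mkQ LinearMap.id (Submodule.mkQ_surjective _)
    set e : R := g (Submodule.Quotient.mk 1) with he
    have h1 : Submodule.Quotient.mk (p := (Ideal.span {x} : Submodule R R)) e
        = Submodule.Quotient.mk 1 := by
      have := congrArg (fun φ => φ (Submodule.Quotient.mk
        (p := (Ideal.span {x} : Submodule R R)) 1)) hg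
      simpa [he] using this
    have hxe : x * e = 0 := by
      have hx0 : Submodule.Quotient.mk (p := (Ideal.span {x} : Submodule R R)) x = 0 := by
        rw [Submodule.Quotient.mk_eq_zero]
        exact Ideal.subset_span rfl
      have hg0 : g (Submodule.Quotient.mk x) = 0 := by rw [hx0, map_zero]
      calc x * e = x • e := rfl
        _ = g (x • Submodule.Quotient.mk 1) := by rw [map_smul]
        _ = g (Submodule.Quotient.mk x) := by
            rw [← Submodule.Quotient.mk_smul]; norm_num
        _ = 0 := hg0
    obtain ⟨c, hc⟩ := Ideal.mem_span_singleton'.1 ((Submodule.Quotient.eq _).1 h1)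
    have hkey : x * (1 + c * x) = 0 := by linear_combination x * hc + hxe
    have hmem : x * (1 + c * x) ∈ nilradical R := by rw [hkey]; exact (nilradical R).zero_mem
    have h3 : (1 + c * x) ∈ nilradical R := (hp.mem_or_mem hmem).resolve_left hx
    refine ⟨-(Ideal.Quotient.mk _ c), ?_⟩
    have h4 : Ideal.Quotient.mk (nilradical R) (1 + c * x) = 0 :=
      Ideal.Quotient.eq_zero_iff_mem.2 h3
    rw [map_add, map_mul, map_one] at h4
    linear_combination -h4
  · intro hF M _ _ T _ _ hT n hn
    have htriv : ∀ t : T, t = 0 := by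
      intro t
      obtain ⟨I, hI, hann⟩ := hT t
      obtain ⟨x, hxI, hxn⟩ : ∃ x ∈ I, x ∉ nilradical R := by
        by_contra hcon; push_neg at hcon
        exact hI (fun y hy => hcon y hy)
      have hx0 : (Ideal.Quotient.mk (nilradical R) x) ≠ 0 :=
        fun h0 => hxn (Ideal.Quotient.eq_zero_iff_mem.1 h0)
      obtain ⟨b, hb⟩ := hF.mul_inv_cancel hx0
      obtain ⟨c, rfl⟩ := Ideal.Quotient.mk_surjective b
      have hmk : Ideal.Quotient.mk (nilradical R) (1 - x * c) = 0 := by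
        rw [map_sub, map_one, map_mul, hb, sub_self]
      have hnil : IsNilpotent (1 - x * c) :=
        mem_nilradical.1 (Ideal.Quotient.eq_zero_iff_mem.1 hmk)
      have hu : IsUnit (x * c) := by
        have := hnil.isUnit_one_sub
        simpa using this
      obtain ⟨v, hv⟩ := hu.exists_right_inv
      have h1 : (1 : R) ∈ I := by
        rw [← hv, mul_assoc]
        exact I.mul_mem_right _ hxI
      simpa using hann 1 h1
    haveI hsub : Subsingleton T := ⟨fun a b => by rw [htriv a, htriv b]⟩
    obtain ⟨m, rfl⟩ : ∃ m, n = m + 1 := ⟨n - 1, (Nat.succ_pred_eq_of_pos hn).symm⟩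
    haveI : CategoryTheory.Projective (ModuleCat.of R T) :=
      (@ModuleCat.isZero_of_subsingleton _ _ (ModuleCat.of R T) hsub).projective
    exact subsingleton_of_isZero' (isZero_Ext_succ_of_projective (ModuleCat.of R T)
      (ModuleCat.of R M) m)
end
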